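/- arXiv:0805.4777 — 7 statements merged into one kernel-verified Lean document; each statement's English description precedes it below -/
import Mathlib

section
/- Let M₁ and M₂ be invertible μ×μ matrices over ℂ[z,z⁻¹] such that every entry of M₁ and every entry of M₂ has support contained in {0,1,…,n}. Then every entry of the matrix M₁⁻¹·M₂ has support contained in {k ∈ ℤ : -μn ≤ k ≤ μn}. -/
/-!
Write `M₁⁻¹ = (det M₁)⁻¹ • adj M₁`. Supports add under multiplication, so the entries of
`adj M₁ * M₂` and `det M₁` are supported in `[0, μn]`. Over a domain the top (bottom)
coefficient of a product is the product of the top (bottom) coefficients, so `u * v = 1` with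
`supp u ⊆ [a, b]` forces `supp v ⊆ [-b, -a]`; hence `(det M₁)⁻¹` is supported in `[-μn, 0]`.
-/

open AddMonoidAlgebra LaurentPolynomial
open scoped Pointwise

section UniqueAdd

variable {α : Type*} [Add α] [LinearOrder α] [AddLeftStrictMono α] [AddRightStrictMono α]

theorem uniqueAdd_max' {A B : Finset α} (hA : A.Nonempty) (hB : B.Nonempty) :
    UniqueAdd A B (A.max' hA) (B.max' hB) := fun _ _ ha hb h =>
  (add_eq_add_iff_eq_and_eq (A.le_max' _ ha) (B.le_max' _ hb)).1 h

theorem uniqueAdd_min' {A B : Finset α} (hA : A.Nonempty) (hB : B.Nonempty) :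
    UniqueAdd A B (A.min' hA) (B.min' hB) := fun _ _ ha hb h =>
  ((add_eq_add_iff_eq_and_eq (A.min'_le _ ha) (B.min'_le _ hb)).1 h.symm).imp Eq.symm Eq.symm

end UniqueAdd

namespace LaurentPolynomial

variable {R : Type*}

section Semiring

variable [Semiring R]

theorem mem_supported_Icc_iff {f : R[T;T⁻¹]} {a b : ℤ} :
    f ∈ supported R R (Set.Icc a b) ↔ f.coeff.support ⊆ Finset.Icc a b := by
  rw [mem_supported, ← Finset.coe_Icc, Finset.coe_subset]

theorem mul_mem_supported_Icc {f g : R[T;T⁻¹]} {a b c d : ℤ}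
    (hf : f ∈ supported R R (Set.Icc a b)) (hg : g ∈ supported R R (Set.Icc c d)) :
    f * g ∈ supported R R (Set.Icc (a + c) (b + d)) := by
  classical
  rw [mem_supported] at hf hg ⊢
  calc (↑(f * g).coeff.support : Set ℤ)
      ⊆ ↑(f.coeff.support + g.coeff.support) :=
        Finset.coe_subset.2 (support_coeff_mul_subset f g)
    _ = ↑f.coeff.support + ↑g.coeff.support := Finset.coe_add _ _
    _ ⊆ Set.Icc a b + Set.Icc c d := Set.add_subset_add hf hg
    _ ⊆ Set.Icc (a + c) (b + d) := Set.Icc_add_Icc_subset a b c d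

theorem add_max'_mem_support_mul [NoZeroDivisors R] {f g : R[T;T⁻¹]}
    (hf : f.coeff.support.Nonempty) (hg : g.coeff.support.Nonempty) :
    f.coeff.support.max' hf + g.coeff.support.max' hg ∈ (f * g).coeff.support := by
  rw [Finsupp.mem_support_iff, coeff_mul_add_of_uniqueAdd (uniqueAdd_max' hf hg)]
  exact mul_ne_zero (Finsupp.mem_support_iff.1 (Finset.max'_mem _ _))
    (Finsupp.mem_support_iff.1 (Finset.max'_mem _ _))

theorem add_min'_mem_support_mul [NoZeroDivisors R] {f g : R[T;T⁻¹]}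
    (hf : f.coeff.support.Nonempty) (hg : g.coeff.support.Nonempty) :
    f.coeff.support.min' hf + g.coeff.support.min' hg ∈ (f * g).coeff.support := by
  rw [Finsupp.mem_support_iff, coeff_mul_add_of_uniqueAdd (uniqueAdd_min' hf hg)]
  exact mul_ne_zero (Finsupp.mem_support_iff.1 (Finset.min'_mem _ _))
    (Finsupp.mem_support_iff.1 (Finset.min'_mem _ _))

theorem mem_supported_Icc_neg_of_mul_eq_one [NoZeroDivisors R] {u v : R[T;T⁻¹]} {a b : ℤ}
    (huv : u * v = 1) (hu : u ∈ supported R R (Set.Icc a b)) :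
    v ∈ supported R R (Set.Icc (-b) (-a)) := by
  rw [mem_supported_Icc_iff] at hu ⊢
  intro k hk
  have hv : v.coeff.support.Nonempty := ⟨k, hk⟩
  have hu_ne : u.coeff.support.Nonempty := by
    refine Finsupp.support_nonempty_iff.2 fun h0 => ?_
    rw [coeff_eq_zero] at h0
    have hv0 : v = 0 := by rw [← one_mul v, ← huv, h0, zero_mul, zero_mul]
    simp [hv0] at hk
  have mem_support_one {l : ℤ} (hl : l ∈ (u * v).coeff.support) : l = 0 := by
    rw [huv] at hl
    exact Finset.mem_zero.1 (support_coeff_one_subset hl)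
  have hmax := mem_support_one (add_max'_mem_support_mul hu_ne hv)
  have hmin := mem_support_one (add_min'_mem_support_mul hu_ne hv)
  have hu_max := Finset.mem_Icc.1 (hu (Finset.max'_mem _ hu_ne))
  have hu_min := Finset.mem_Icc.1 (hu (Finset.min'_mem _ hu_ne))
  exact Finset.mem_Icc.2
    ⟨by linarith [Finset.min'_le _ k hk], by linarith [Finset.le_max' _ k hk]⟩

end Semiring

theorem prod_mem_supported_Icc [CommSemiring R] {ι : Type*} {s : Finset ι} {f : ι → R[T;T⁻¹]}
    {a b : ι → ℤ} (h : ∀ i ∈ s, f i ∈ supported R R (Set.Icc (a i) (b i))) :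
    ∏ i ∈ s, f i ∈ supported R R (Set.Icc (∑ i ∈ s, a i) (∑ i ∈ s, b i)) := by
  classical
  induction s using Finset.cons_induction with
  | empty =>
    rw [Finset.prod_empty, Finset.sum_empty, Finset.sum_empty, mem_supported_Icc_iff]
    intro k hk
    simp [Finset.mem_zero.1 (support_coeff_one_subset hk)]
  | cons i s _ ih =>
    simp only [Finset.prod_cons, Finset.sum_cons]
    exact mul_mem_supported_Icc (h i (s.mem_cons_self i))
      (ih fun j hj => h j (Finset.mem_cons_of_mem hj))

section CommRing

variable [CommRing R]

theorem det_mem_supported_Icc {ι : Type*} [Fintype ι] [DecidableEq ι]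
    {M : Matrix ι ι R[T;T⁻¹]} {a b : ℤ} (h : ∀ i j, M i j ∈ supported R R (Set.Icc a b)) :
    M.det ∈ supported R R (Set.Icc (Fintype.card ι * a) (Fintype.card ι * b)) := by
  rw [Matrix.det_apply]
  refine Submodule.sum_mem _ fun σ _ => zsmul_mem ?_ _
  simpa [Finset.sum_const, Finset.card_univ] using
    prod_mem_supported_Icc (s := Finset.univ) (a := fun _ => a) (b := fun _ => b)
      fun i _ => h (σ i) i

theorem adjugate_mem_supported_Icc {m : ℕ} {M : Matrix (Fin (m + 1)) (Fin (m + 1)) R[T;T⁻¹]}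
    {a b : ℤ} (h : ∀ i j, M i j ∈ supported R R (Set.Icc a b)) (i j : Fin (m + 1)) :
    M.adjugate i j ∈ supported R R (Set.Icc (m * a) (m * b)) := by
  rw [Matrix.adjugate_fin_succ_eq_det_submatrix]
  have hdet := det_mem_supported_Icc (M := M.submatrix j.succAbove i.succAbove) fun k l => h _ _
  rw [Fintype.card_fin] at hdet
  rcases neg_one_pow_eq_or R[T;T⁻¹] (j + i : ℕ) with hsign | hsign <;> rw [hsign]
  · rwa [one_mul]
  · rw [neg_one_mul]
    exact neg_mem hdet

theorem inv_mul_mem_supported_Icc [NoZeroDivisors R] {m : ℕ}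
    {M₁ M₂ : Matrix (Fin (m + 1)) (Fin (m + 1)) R[T;T⁻¹]} {a b : ℤ} (h₁ : IsUnit M₁)
    (hs₁ : ∀ i j, M₁ i j ∈ supported R R (Set.Icc a b))
    (hs₂ : ∀ i j, M₂ i j ∈ supported R R (Set.Icc a b)) (i j : Fin (m + 1)) :
    (M₁⁻¹ * M₂) i j ∈
      supported R R (Set.Icc ((m + 1) * (a - b)) ((m + 1) * (b - a))) := by
  have hentry : (M₁⁻¹ * M₂) i j = Ring.inverse M₁.det * (M₁.adjugate * M₂) i j := by
    rw [Matrix.inv_def, Matrix.smul_mul, Matrix.smul_apply, smul_eq_mul]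
  have hinv : Ring.inverse M₁.det ∈
      supported R R (Set.Icc (-((m + 1 : ℕ) * b)) (-((m + 1 : ℕ) * a))) :=
    mem_supported_Icc_neg_of_mul_eq_one
      (Ring.mul_inverse_cancel _ ((Matrix.isUnit_iff_isUnit_det M₁).1 h₁))
      (by simpa using det_mem_supported_Icc hs₁)
  have hprod : (M₁.adjugate * M₂) i j ∈ supported R R (Set.Icc (m * a + a) (m * b + b)) :=
    Submodule.sum_mem _ fun k _ =>
      mul_mem_supported_Icc (adjugate_mem_supported_Icc hs₁ i k) (hs₂ k j)
  rw [hentry]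
  convert mul_mem_supported_Icc hinv hprod using 3 <;> push_cast <;> ring

end CommRing

end LaurentPolynomial

theorem stmt_0_general (μ n : ℕ)
    (M₁ M₂ : Matrix (Fin μ) (Fin μ) (LaurentPolynomial ℂ))
    (h₁ : IsUnit M₁)
    (hs₁ : ∀ i j, (M₁ i j).coeff.support ⊆ Finset.Icc (0 : ℤ) (n : ℤ))
    (hs₂ : ∀ i j, (M₂ i j).coeff.support ⊆ Finset.Icc (0 : ℤ) (n : ℤ)) :
    ∀ i j, ((M₁⁻¹ * M₂) i j).coeff.support ⊆
      Finset.Icc (-((μ : ℤ) * (n : ℤ))) ((μ : ℤ) * (n : ℤ)) := by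
  intro i j
  obtain ⟨m, rfl⟩ : ∃ m, μ = m + 1 := Nat.exists_eq_add_one.2 i.pos
  have h := inv_mul_mem_supported_Icc h₁ (fun i j => mem_supported_Icc_iff.2 (hs₁ i j))
    (fun i j => mem_supported_Icc_iff.2 (hs₂ i j)) i j
  rw [mem_supported_Icc_iff] at h
  convert h using 2 <;> push_cast <;> ring

/-- If `M₁, M₂` are invertible `μ×μ` matrices over `ℂ[z,z⁻¹]` all of whose
entries have support contained in `{0,…,n}`, then every entry of `M₁⁻¹ * M₂` has support
contained in `{k : -μn ≤ k ≤ μn}`. -/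
theorem stmt_0 (μ n : ℕ) (hμ : 1 ≤ μ)
    (M₁ M₂ : Matrix (Fin μ) (Fin μ) (LaurentPolynomial ℂ))
    (h₁ : IsUnit M₁) (h₂ : IsUnit M₂)
    (hs₁ : ∀ i j, (M₁ i j).coeff.support ⊆ Finset.Icc (0 : ℤ) (n : ℤ))
    (hs₂ : ∀ i j, (M₂ i j).coeff.support ⊆ Finset.Icc (0 : ℤ) (n : ℤ)) :
    ∀ i j, ((M₁⁻¹ * M₂) i j).coeff.support ⊆
      Finset.Icc (-((μ : ℤ) * (n : ℤ))) ((μ : ℤ) * (n : ℤ)) :=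
  stmt_0_general μ n M₁ M₂ h₁ hs₁ hs₂
end

section
/- Let M be an invertible μ×μ matrix over ℂ[z,z⁻¹] such that every entry of M has support contained in {0,1,…,n}. Then every entry of M⁻¹ has support contained in {k ∈ ℤ : -μn ≤ k ≤ (μ-1)n}. -/
/-!
Write `M⁻¹ = (det M)⁻¹ • adj M`. Expanding determinants along permutations, `det M` has support
in `[0, μn]` and every cofactor in `[0, (μ-1)n]`. If `d * u = 1`, the coefficient of `d * u` at
the sum of the top degrees of `d` and `u` is the product of their (nonzero) top coefficients, so
the top degrees add up to `0`; the same holds for the bottom degrees. Hence `supp d ⊆ [a, b]`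
forces `supp d⁻¹ ⊆ [-b, -a]`, and the supports of `(det M)⁻¹` and of `adj M` add up to
`[-μn, (μ-1)n]`.
-/

open LaurentPolynomial

namespace LaurentPolynomial

variable {R : Type*}

section Semiring

variable [Semiring R]

theorem coeff_mul_add_of_forall_le {p q : R[T;T⁻¹]} {a b : ℤ}
    (hp : ∀ i ∈ p.coeff.support, i ≤ a) (hq : ∀ j ∈ q.coeff.support, j ≤ b) :
    (p * q).coeff (a + b) = p.coeff a * q.coeff b := by
  classical
  rw [AddMonoidAlgebra.coeff_mul, Finsupp.sum, Finset.sum_eq_single a]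
  · rw [Finsupp.sum, Finset.sum_eq_single b, if_pos rfl]
    · exact fun j hj hjb => if_neg fun hab => hjb (by linarith [hq j hj])
    · intro hb
      rw [if_pos rfl, Finsupp.notMem_support_iff.1 hb, mul_zero]
  · refine fun i hi hia => Finset.sum_eq_zero fun j hj => if_neg fun hab => hia ?_
    linarith [hp i hi, hq j hj]
  · intro ha
    simp [Finsupp.notMem_support_iff.1 ha]

theorem support_mul_subset_Icc {p q : R[T;T⁻¹]} {a b c d : ℤ}
    (hp : p.coeff.support ⊆ Finset.Icc a b) (hq : q.coeff.support ⊆ Finset.Icc c d) :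
    (p * q).coeff.support ⊆ Finset.Icc (a + c) (b + d) := by
  classical
  refine (AddMonoidAlgebra.support_coeff_mul_subset p q).trans fun k hk => ?_
  obtain ⟨i, hi, j, hj, rfl⟩ := Finset.mem_add.1 hk
  have hi := Finset.mem_Icc.1 (hp hi)
  have hj := Finset.mem_Icc.1 (hq hj)
  exact Finset.mem_Icc.2 ⟨by omega, by omega⟩

end Semiring

section CommSemiring

variable [CommSemiring R]

theorem support_prod_subset_Icc {ι : Type*} (s : Finset ι) (f : ι → R[T;T⁻¹]) (a b : ι → ℤ)
    (h : ∀ i ∈ s, (f i).coeff.support ⊆ Finset.Icc (a i) (b i)) :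
    (∏ i ∈ s, f i).coeff.support ⊆ Finset.Icc (∑ i ∈ s, a i) (∑ i ∈ s, b i) := by
  classical
  induction s using Finset.cons_induction with
  | empty =>
    rw [Finset.prod_empty, Finset.sum_empty, Finset.sum_empty, Finset.Icc_self,
      AddMonoidAlgebra.one_def, AddMonoidAlgebra.coeff_single]
    exact Finsupp.support_single_subset
  | cons i s hi ih =>
    simp only [Finset.prod_cons, Finset.sum_cons]
    exact support_mul_subset_Icc (h i (Finset.mem_cons_self i s))
      (ih fun j hj => h j (Finset.mem_cons_of_mem hj))

theorem mem_support_invert {p : R[T;T⁻¹]} {i : ℤ} :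
    i ∈ (invert p).coeff.support ↔ -i ∈ p.coeff.support := by
  simp only [Finsupp.mem_support_iff, invert_apply]

theorem isGreatest_support_invert {p : R[T;T⁻¹]} {a : ℤ} (ha : IsLeast p.coeff.support a) :
    IsGreatest (invert p).coeff.support (-a) :=
  ⟨mem_support_invert.2 ((neg_neg a).symm ▸ ha.1),
    fun _ hi => le_neg_of_le_neg (ha.2 (mem_support_invert.1 hi))⟩

theorem add_eq_zero_of_mul_eq_one_of_isGreatest [NoZeroDivisors R] {p q : R[T;T⁻¹]}
    (h : p * q = 1) {a b : ℤ} (ha : IsGreatest p.coeff.support a) (hb : IsGreatest q.coeff.support b) :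
    a + b = 0 := by
  by_contra hab
  have hcoeff := coeff_mul_add_of_forall_le ha.2 hb.2
  rw [h, AddMonoidAlgebra.one_def, AddMonoidAlgebra.coeff_single,
    Finsupp.single_eq_of_ne hab] at hcoeff
  exact mul_ne_zero (Finsupp.mem_support_iff.1 ha.1) (Finsupp.mem_support_iff.1 hb.1) hcoeff.symm

theorem support_subset_Icc_neg_of_mul_eq_one [NoZeroDivisors R] {p q : R[T;T⁻¹]} (h : p * q = 1)
    {a b : ℤ} (hp : p.coeff.support ⊆ Finset.Icc a b) :
    q.coeff.support ⊆ Finset.Icc (-b) (-a) := by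
  intro k hk
  have hq0 : q.coeff.support.Nonempty := ⟨k, hk⟩
  have hp0 : p.coeff.support.Nonempty := by
    rw [Finsupp.support_nonempty_iff, Ne, AddMonoidAlgebra.coeff_eq_zero]
    rintro rfl
    rw [zero_mul] at h
    have hq : q = 0 := by rw [← one_mul q, ← h, zero_mul]
    simp [hq] at hk
  have hmax := add_eq_zero_of_mul_eq_one_of_isGreatest h
    (Finset.isGreatest_max' _ hp0) (Finset.isGreatest_max' _ hq0)
  -- `invert` (`T ↦ T⁻¹`) turns bottom degrees into top degrees.
  have hmin := add_eq_zero_of_mul_eq_one_of_isGreatest (by rw [← map_mul, h, map_one])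
    (isGreatest_support_invert (Finset.isLeast_min' _ hp0))
    (isGreatest_support_invert (Finset.isLeast_min' _ hq0))
  have hpmax := Finset.mem_Icc.1 (hp (Finset.max'_mem _ hp0))
  have hpmin := Finset.mem_Icc.1 (hp (Finset.min'_mem _ hp0))
  have hk₁ := Finset.le_max' _ k hk
  have hk₂ := Finset.min'_le _ k hk
  exact Finset.mem_Icc.2 ⟨by omega, by omega⟩

end CommSemiring

section CommRing

variable [CommRing R] {n : Type*} [Fintype n] [DecidableEq n]

theorem support_det_subset_Icc (N : Matrix n n R[T;T⁻¹]) (a b : n → ℤ)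
    (h : ∀ i j, (N i j).coeff.support ⊆ Finset.Icc (a i) (b i)) :
    N.det.coeff.support ⊆ Finset.Icc (∑ i, a i) (∑ i, b i) := by
  intro k hk
  rw [Matrix.det_apply, AddMonoidAlgebra.coeff_sum] at hk
  obtain ⟨σ, -, hσ⟩ := Finsupp.mem_support_finsetSum k hk
  have hprod := support_prod_subset_Icc Finset.univ (fun i => N (σ i) i) (fun i => a (σ i))
    (fun i => b (σ i)) (fun i _ => h (σ i) i) (Finsupp.support_smul hσ)
  rwa [Equiv.sum_comp σ a, Equiv.sum_comp σ b] at hprod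

theorem sum_update_const_zero (j : n) (x : ℤ) :
    ∑ r, Function.update (fun _ => x) j 0 r = (Fintype.card n - 1) * x := by
  have hcard : 1 ≤ Fintype.card n := Fintype.card_pos_iff.2 ⟨j⟩
  simp [Finset.sum_update_of_mem, Finset.card_sdiff, Nat.cast_sub hcard]

theorem support_adjugate_subset_Icc (N : Matrix n n R[T;T⁻¹]) (a b : ℤ)
    (h : ∀ i j, (N i j).coeff.support ⊆ Finset.Icc a b) (i j : n) :
    (N.adjugate i j).coeff.support ⊆
      Finset.Icc ((Fintype.card n - 1) * a) ((Fintype.card n - 1) * b) := by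
  rw [Matrix.adjugate_apply, ← sum_update_const_zero j a, ← sum_update_const_zero j b]
  refine support_det_subset_Icc _ _ _ fun r s => ?_
  rcases eq_or_ne r j with rfl | hr
  · rw [Matrix.updateRow_self, Function.update_self, Function.update_self, Finset.Icc_self,
      Pi.single_apply]
    split_ifs
    · rw [AddMonoidAlgebra.one_def, AddMonoidAlgebra.coeff_single]
      exact Finsupp.support_single_subset
    · simp
  · rw [Matrix.updateRow_ne hr, Function.update_of_ne hr, Function.update_of_ne hr]
    exact h r s

theorem support_inv_subset_Icc [NoZeroDivisors R] (N : Matrix n n R[T;T⁻¹]) (hN : IsUnit N)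
    (a b : ℤ) (h : ∀ i j, (N i j).coeff.support ⊆ Finset.Icc a b) (i j : n) :
    (N⁻¹ i j).coeff.support ⊆ Finset.Icc ((Fintype.card n - 1) * a - Fintype.card n * b)
      ((Fintype.card n - 1) * b - Fintype.card n * a) := by
  have hdet := support_det_subset_Icc N (fun _ => a) (fun _ => b) h
  simp only [Finset.sum_const, Finset.card_univ, nsmul_eq_mul] at hdet
  have hinv := support_subset_Icc_neg_of_mul_eq_one
    (Ring.mul_inverse_cancel _ ((N.isUnit_iff_isUnit_det).1 hN)) hdet
  rw [Matrix.inv_def, Matrix.smul_apply, smul_eq_mul]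
  convert support_mul_subset_Icc hinv (support_adjugate_subset_Icc N a b h i j) using 2 <;> ring

end CommRing

end LaurentPolynomial

theorem stmt_1_general (μ n : ℕ)
    (M : Matrix (Fin μ) (Fin μ) (LaurentPolynomial ℂ))
    (h : IsUnit M)
    (hs : ∀ i j, (M i j).coeff.support ⊆ Finset.Icc (0 : ℤ) (n : ℤ)) :
    ∀ i j, (M⁻¹ i j).coeff.support ⊆
      Finset.Icc (-((μ : ℤ) * (n : ℤ))) (((μ : ℤ) - 1) * (n : ℤ)) := by
  intro i j
  simpa using LaurentPolynomial.support_inv_subset_Icc M h 0 n hs i j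

/-- If `M` is an invertible `μ×μ` matrix over `ℂ[z,z⁻¹]` all of whose entries
have support contained in `{0,…,n}`, then every entry of `M⁻¹` has support contained in
`{k : -μn ≤ k ≤ (μ-1)n}`. -/
theorem stmt_1 (μ n : ℕ) (hμ : 1 ≤ μ)
    (M : Matrix (Fin μ) (Fin μ) (LaurentPolynomial ℂ))
    (h : IsUnit M)
    (hs : ∀ i j, (M i j).coeff.support ⊆ Finset.Icc (0 : ℤ) (n : ℤ)) :
    ∀ i j, (M⁻¹ i j).coeff.support ⊆
      Finset.Icc (-((μ : ℤ) * (n : ℤ))) (((μ : ℤ) - 1) * (n : ℤ)) :=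
  stmt_1_general μ n M h hs
end

section
/- For every l ∈ ℤ one has P(x,y) = 0 for all x ∈ W_{-l} and y ∈ W_{l-1}; consequently P induces a well-defined bilinear pairing Gr^W_{-l} × Gr^W_l → ℂ, and this induced pairing is nondegenerate. -/
/-!
`P` pairs `W_a` with `W_b` trivially whenever `a + b < 0`. This goes by induction on the smaller
index `b = -m`: write `y ∈ W_{-m}` as `N^m z` modulo `W_{-m-1}` and move `N^m` across `P`, which
leaves two pairings with a smaller index. The isomorphisms `N^l : Gr_l ≅ Gr_{-l}` give
`dim Gr_l = dim Gr_{-l}`, so `dim W_l + dim W_{-l-1}` does not depend on `l`; at the ends of the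
filtration it is `dim V`. Hence `W_l` is the whole orthogonal of `W_{-l-1}`, which is the
nondegeneracy of the induced pairing on graded pieces.
-/

open Module
open LinearMap (BilinForm)

/-- The last two fields say that `N^l` induces a bijection `Gr^W_l → Gr^W_{-l}`, written on
representatives. -/
structure IsWeightFiltration {R V : Type*} [Ring R] [AddCommGroup V] [Module R V]
    (N : Module.End R V) (W : ℤ → Submodule R V) : Prop where
  mono : Monotone W
  eventually_bot : ∃ a : ℤ, ∀ l ≤ a, W l = ⊥
  eventually_top : ∃ b : ℤ, ∀ l, b ≤ l → W l = ⊤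
  apply_mem : ∀ l : ℤ, ∀ x ∈ W l, N x ∈ W (l - 2)
  mem_of_pow_apply_mem : ∀ l : ℕ, ∀ x ∈ W (l : ℤ),
    (N ^ l) x ∈ W (-(l : ℤ) - 1) → x ∈ W ((l : ℤ) - 1)
  exists_pow_apply_sub_mem : ∀ l : ℕ, ∀ y ∈ W (-(l : ℤ)),
    ∃ x ∈ W (l : ℤ), (N ^ l) x - y ∈ W (-(l : ℤ) - 1)

theorem LinearMap.BilinForm.apply_pow_eq_neg_one_pow_mul {R V : Type*} [CommRing R] [AddCommGroup V]
    [Module R V] {P : BilinForm R V} {N : Module.End R V}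
    (hPN : ∀ x y, P (N x) y + P x (N y) = 0) (k : ℕ) (x y : V) :
    P x ((N ^ k) y) = (-1) ^ k * P ((N ^ k) x) y := by
  induction k generalizing y with
  | zero => simp
  | succ k ih =>
    calc P x ((N ^ (k + 1)) y) = P x ((N ^ k) (N y)) := by rw [pow_succ, Module.End.mul_apply]
      _ = (-1) ^ k * P ((N ^ k) x) (N y) := ih _
      _ = (-1) ^ (k + 1) * P ((N ^ (k + 1)) x) y := by
        rw [pow_succ' N, Module.End.mul_apply, eq_neg_of_add_eq_zero_right (hPN _ y)]
        ring

theorem finrank_add_finrank_eq_of_bijOn_quotient {K V U : Type*} [Field K]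
    [AddCommGroup V] [Module K V] [AddCommGroup U] [Module K U]
    [FiniteDimensional K V] [FiniteDimensional K U]
    {A A' : Submodule K V} {B B' : Submodule K U} (hA : A' ≤ A) (hB : B' ≤ B) (f : V →ₗ[K] U)
    (hfA : ∀ x ∈ A, f x ∈ B) (hfA' : ∀ x ∈ A', f x ∈ B')
    (hinj : ∀ x ∈ A, f x ∈ B' → x ∈ A') (hsurj : ∀ y ∈ B, ∃ x ∈ A, f x - y ∈ B') :
    finrank K A + finrank K B' = finrank K A' + finrank K B := by
  set B'' := B'.comap B.subtype
  set g : A →ₗ[K] B ⧸ B'' := B''.mkQ ∘ₗ f.restrict hfA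
  have hker : LinearMap.ker g = A'.comap A.subtype := by
    ext x
    simp only [g, LinearMap.mem_ker, LinearMap.comp_apply, Submodule.mkQ_apply,
      Submodule.Quotient.mk_eq_zero, B'', Submodule.mem_comap, Submodule.subtype_apply,
      LinearMap.coe_restrict_apply]
    exact ⟨hinj x x.2, hfA' x⟩
  have hrange : LinearMap.range g = ⊤ := by
    refine LinearMap.range_eq_top.mpr fun q ↦ ?_
    obtain ⟨y, rfl⟩ := B''.mkQ_surjective q
    obtain ⟨x, hx, hxy⟩ := hsurj y y.2
    refine ⟨⟨x, hx⟩, (Submodule.Quotient.eq _).mpr ?_⟩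
    simpa [B''] using hxy
  have hrank := g.finrank_range_add_finrank_ker
  rw [hker, hrange, finrank_top, (Submodule.comapSubtypeEquivOfLe hA).finrank_eq] at hrank
  have hquot := Submodule.finrank_quotient_add_finrank B''
  rw [(Submodule.comapSubtypeEquivOfLe hB).finrank_eq] at hquot
  omega

namespace IsWeightFiltration

theorem pow_apply_mem {R V : Type*} [Ring R] [AddCommGroup V] [Module R V]
    {N : Module.End R V} {W : ℤ → Submodule R V} (hW : IsWeightFiltration N W) (k : ℕ)
    {l : ℤ} {x : V} (hx : x ∈ W l) :
    (N ^ k) x ∈ W (l - 2 * k) := by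
  induction k with
  | zero => simpa using hx
  | succ k ih =>
    rw [pow_succ', Module.End.mul_apply]
    convert hW.apply_mem _ _ ih using 2
    push_cast
    ring

section CommRing

variable {R V : Type*} [CommRing R] [AddCommGroup V] [Module R V]
  {N : Module.End R V} {W : ℤ → Submodule R V}

theorem apply_eq_zero_of_add_le_neg_one (hW : IsWeightFiltration N W) {P : BilinForm R V}
    (hP : P.IsRefl) (hPN : ∀ x y, P (N x) y + P x (N y) = 0) {a b : ℤ} (hab : a + b ≤ -1)
    {x y : V} (hx : x ∈ W a) (hy : y ∈ W b) : P x y = 0 := by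
  obtain ⟨a₀, ha₀⟩ := hW.eventually_bot
  have key : ∀ c, a₀ ≤ c → ∀ a b, a + b ≤ -1 → b ≤ a → b ≤ c →
      ∀ x ∈ W a, ∀ y ∈ W b, P x y = 0 := by
    intro c hc
    induction c, hc using Int.leInduction with
    | base =>
      intro a b _ _ hb x _ y hy
      rw [ha₀ b hb, Submodule.mem_bot] at hy
      simp [hy]
    | succ c _ ih =>
      intro a b hab hba hbc x hx y hy
      obtain hbc | rfl := hbc.lt_or_eq
      · exact ih a b hab hba (by omega) x hx y hy
      obtain ⟨m, hm⟩ : ∃ m : ℕ, (m : ℤ) = -(c + 1) := ⟨(-(c + 1)).toNat, by omega⟩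
      obtain ⟨z, hz, hzy⟩ := hW.exists_pow_apply_sub_mem m y (by rwa [hm, neg_neg])
      have hpow : P ((N ^ m) x) z = 0 :=
        hP _ _ (ih m (a - 2 * m) (by omega) (by omega) (by omega) z hz _ (hW.pow_apply_mem m hx))
      have hsub : P x ((N ^ m) z - y) = 0 :=
        ih a (c + 1 - 1) (by omega) (by omega) (by omega) x hx _ (by rwa [hm, neg_neg] at hzy)
      rw [map_sub, LinearMap.BilinForm.apply_pow_eq_neg_one_pow_mul hPN, hpow, mul_zero, zero_sub,
        neg_eq_zero] at hsub
      exact hsub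
  rcases le_total b a with h | h
  · exact key (max a₀ b) (le_max_left _ _) a b hab h (le_max_right _ _) x hx y hy
  · exact hP _ _ (key (max a₀ a) (le_max_left _ _) b a (by omega) h (le_max_right _ _) y hy x hx)

end CommRing

section Field

variable {K V : Type*} [Field K] [AddCommGroup V] [Module K V] [FiniteDimensional K V]
  {N : Module.End K V} {W : ℤ → Submodule K V}

theorem finrank_add_finrank_neg_sub_one_eq (hW : IsWeightFiltration N W) (l : ℤ) :
    finrank K (W l) + finrank K (W (-l - 1)) = finrank K (W (l - 1)) + finrank K (W (-l)) := by
  have hnat : ∀ m : ℕ, finrank K (W m) + finrank K (W (-m - 1)) =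
      finrank K (W (m - 1)) + finrank K (W (-m)) := fun m ↦
    finrank_add_finrank_eq_of_bijOn_quotient (hW.mono (by omega)) (hW.mono (by omega)) (N ^ m)
      (fun x hx ↦ by simpa [two_mul] using hW.pow_apply_mem m hx)
      (fun x hx ↦ by convert hW.pow_apply_mem m hx using 2; ring)
      (hW.mem_of_pow_apply_mem m) (hW.exists_pow_apply_sub_mem m)
  obtain ⟨m, rfl | rfl⟩ := l.eq_nat_or_neg
  · exact hnat m
  · have := hnat m
    rw [neg_neg]
    omega

theorem finrank_add_finrank_neg_sub_one (hW : IsWeightFiltration N W) (l : ℤ) :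
    finrank K (W l) + finrank K (W (-l - 1)) = finrank K V := by
  have hconst : ∀ n, l ≤ n →
      finrank K (W l) + finrank K (W (-l - 1)) = finrank K (W n) + finrank K (W (-n - 1)) := by
    intro n hn
    induction n, hn using Int.leInduction with
    | base => rfl
    | succ n _ ih =>
      have step := hW.finrank_add_finrank_neg_sub_one_eq (n + 1)
      rw [add_sub_cancel_right] at step
      rw [show -(n + 1) = -n - 1 by ring] at step ⊢
      omega
  obtain ⟨a, ha⟩ := hW.eventually_bot
  obtain ⟨b, hb⟩ := hW.eventually_top
  set n := max b (max (-a - 1) l)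
  rw [hconst n (by omega), hb n (by omega), ha (-n - 1) (by omega), finrank_top, finrank_bot,
    add_zero]

theorem eq_orthogonal (hW : IsWeightFiltration N W) {P : BilinForm K V} (hP : P.IsRefl)
    (hPnd : P.Nondegenerate) (hPN : ∀ x y, P (N x) y + P x (N y) = 0) (l : ℤ) :
    W l = P.orthogonal (W (-l - 1)) := by
  refine Submodule.eq_of_le_of_finrank_le
    (fun y hy x hx ↦ hW.apply_eq_zero_of_add_le_neg_one hP hPN (by omega) hx hy) ?_
  have := hW.finrank_add_finrank_neg_sub_one l
  rw [BilinForm.finrank_orthogonal hPnd]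
  omega

end Field

end IsWeightFiltration

theorem stmt_3_general {V : Type*} [AddCommGroup V] [Module ℂ V] [FiniteDimensional ℂ V]
    (N : Module.End ℂ V)
    (W : ℤ → Submodule ℂ V)
    (hmono : Monotone W)
    (hbot : ∃ a : ℤ, ∀ l ≤ a, W l = ⊥)
    (htop : ∃ b : ℤ, ∀ l, b ≤ l → W l = ⊤)
    (hshift : ∀ l : ℤ, ∀ x ∈ W l, N x ∈ W (l - 2))
    (hisoinj : ∀ l : ℕ, ∀ x ∈ W (l : ℤ),
      (N ^ l) x ∈ W (-(l : ℤ) - 1) → x ∈ W ((l : ℤ) - 1))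
    (hisosurj : ∀ l : ℕ, ∀ y ∈ W (-(l : ℤ)),
      ∃ x ∈ W (l : ℤ), (N ^ l) x - y ∈ W (-(l : ℤ) - 1))
    (w : ℤ) (P : V →ₗ[ℂ] V →ₗ[ℂ] ℂ)
    (hPnd : ∀ x : V, (∀ y : V, P x y = 0) → x = 0)
    (hPsym : ∀ x y : V, P x y = (-1 : ℂ) ^ w * P y x)
    (hPN : ∀ x y : V, P (N x) y + P x (N y) = 0) :
    -- vanishing:  P(W_{-l}, W_{l-1}) = 0
    (∀ l : ℤ, ∀ x ∈ W (-l), ∀ y ∈ W (l - 1), P x y = 0) ∧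
    -- well-definedness of the induced pairing on Gr^W_{-l} × Gr^W_l
    (∀ l : ℤ, ∀ x ∈ W (-l), ∀ x' ∈ W (-l), ∀ y ∈ W l, ∀ y' ∈ W l,
      x - x' ∈ W (-l - 1) → y - y' ∈ W (l - 1) → P x y = P x' y') ∧
    -- nondegeneracy of the induced pairing, in the first argument …
    (∀ l : ℤ, ∀ x ∈ W (-l), (∀ y ∈ W l, P x y = 0) → x ∈ W (-l - 1)) ∧
    -- … and in the second argument
    (∀ l : ℤ, ∀ y ∈ W l, (∀ x ∈ W (-l), P x y = 0) → y ∈ W (l - 1)) := by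
  have hW : IsWeightFiltration N W := ⟨hmono, hbot, htop, hshift, hisoinj, hisosurj⟩
  have hP : P.IsRefl := fun x y h ↦ by rw [hPsym, h, mul_zero]
  have hPnondeg : P.Nondegenerate := hP.nondegenerate_iff_separatingLeft.mpr hPnd
  have hvan : ∀ {a b : ℤ}, a + b ≤ -1 → ∀ {x y : V}, x ∈ W a → y ∈ W b → P x y = 0 :=
    hW.apply_eq_zero_of_add_le_neg_one hP hPN
  refine ⟨fun l x hx y hy ↦ hvan (by omega) hx hy, ?_, ?_, ?_⟩
  · intro l x _ x' hx' y hy y' _ hxx' hyy'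
    calc P x y = P (x - x') y + P x' (y - y') + P x' y' := by simp
      _ = P x' y' := by rw [hvan (by omega) hxx' hy, hvan (by omega) hx' hyy', zero_add, zero_add]
  · intro l x _ h
    rw [hW.eq_orthogonal hP hPnondeg hPN (-l - 1), show -(-l - 1) - 1 = l by ring]
    exact fun y hy ↦ hP _ _ (h y hy)
  · intro l y _ h
    rw [hW.eq_orthogonal hP hPnondeg hPN (l - 1), show -(l - 1) - 1 = -l by ring]
    exact h

/-- Let `V` be a finite-dimensional complex vector space, `N` a nilpotent
endomorphism with weight filtration `W` centered at `0`, and `P` a nondegenerate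
`(-1)^w`-symmetric bilinear form for which `N` is an infinitesimal isometry.  Then for
every `l`, `P` vanishes on `W_{-l} × W_{l-1}`; consequently `P` induces a well-defined
bilinear pairing `Gr^W_{-l} × Gr^W_l → ℂ` (independence of representatives), and this
induced pairing is nondegenerate (in both arguments).

The graded pieces `Gr^W_l = W_l/W_{l-1}` are treated via representatives: a class in
`Gr^W_l` is an element `x ∈ W l` modulo `W (l-1)`.  The hypothesis that `N^l` induces an
isomorphism `Gr^W_l → Gr^W_{-l}` is expressed by injectivity (`hisoinj`) and surjectivity
(`hisosurj`) on representatives. -/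
theorem stmt_3 {V : Type*} [AddCommGroup V] [Module ℂ V] [FiniteDimensional ℂ V]
    (N : Module.End ℂ V) (hnil : IsNilpotent N)
    (W : ℤ → Submodule ℂ V)
    (hmono : Monotone W)
    (hbot : ∃ a : ℤ, ∀ l ≤ a, W l = ⊥)
    (htop : ∃ b : ℤ, ∀ l, b ≤ l → W l = ⊤)
    (hshift : ∀ l : ℤ, ∀ x ∈ W l, N x ∈ W (l - 2))
    (hisoinj : ∀ l : ℕ, ∀ x ∈ W (l : ℤ),
      (N ^ l) x ∈ W (-(l : ℤ) - 1) → x ∈ W ((l : ℤ) - 1))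
    (hisosurj : ∀ l : ℕ, ∀ y ∈ W (-(l : ℤ)),
      ∃ x ∈ W (l : ℤ), (N ^ l) x - y ∈ W (-(l : ℤ) - 1))
    (w : ℤ) (P : V →ₗ[ℂ] V →ₗ[ℂ] ℂ)
    (hPnd : ∀ x : V, (∀ y : V, P x y = 0) → x = 0)
    (hPsym : ∀ x y : V, P x y = (-1 : ℂ) ^ w * P y x)
    (hPN : ∀ x y : V, P (N x) y + P x (N y) = 0) :
    -- vanishing:  P(W_{-l}, W_{l-1}) = 0
    (∀ l : ℤ, ∀ x ∈ W (-l), ∀ y ∈ W (l - 1), P x y = 0) ∧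
    -- well-definedness of the induced pairing on Gr^W_{-l} × Gr^W_l
    (∀ l : ℤ, ∀ x ∈ W (-l), ∀ x' ∈ W (-l), ∀ y ∈ W l, ∀ y' ∈ W l,
      x - x' ∈ W (-l - 1) → y - y' ∈ W (l - 1) → P x y = P x' y') ∧
    -- nondegeneracy of the induced pairing, in the first argument …
    (∀ l : ℤ, ∀ x ∈ W (-l), (∀ y ∈ W l, P x y = 0) → x ∈ W (-l - 1)) ∧
    -- … and in the second argument
    (∀ l : ℤ, ∀ y ∈ W l, (∀ x ∈ W (-l), P x y = 0) → y ∈ W (l - 1)) :=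
  stmt_3_general N W hmono hbot htop hshift hisoinj hisosurj w P hPnd hPsym hPN
end

section
/- L coincides with the set of all σ ∈ W such that P^{(w-1)}(a, σ) = 0 for every a ∈ L. -/
/-!
The inclusion `⊆` holds because `P(L × L) ⊆ z^w ℂ[z]`. Conversely, let `σ` satisfy the condition.
Since `L` spans `W`, some `z^n σ` lies in `L`, and the condition is stable under `σ ↦ zσ` because
`P^{(w-1)}(a, zσ) = -P^{(w-1)}(za, σ)`; so by induction on `n` it suffices to show `σ ∈ L` when
`zσ ∈ L`. In that case `P^{(w)}(b, zσ) = -P^{(w-1)}(b, σ) = 0` for all `b ∈ L`, i.e. `zσ` is in the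
right kernel of the form `P^{(w)}` on `L/zL`. In a basis of `L` this form is a square Gram matrix
whose left kernel is trivial by hypothesis; hence its determinant is nonzero, its right kernel is
trivial too, `zσ ∈ zL`, and `σ ∈ L`.
-/

open LaurentPolynomial
open scoped Polynomial

theorem LaurentPolynomial.coeff_T_mul {R : Type*} [Semiring R] (n m : ℤ) (f : R[T;T⁻¹]) :
    (T n * f).coeff m = f.coeff (m - n) := by
  rw [T, AddMonoidAlgebra.coeff_single_mul_apply, one_mul, neg_add_eq_sub]

open Matrix in
theorem Matrix.eq_zero_of_mulVec_eq_zero_of_forall_vecMul {n A : Type*} [Fintype n]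
    [DecidableEq n] [CommRing A] [IsDomain A] {M : Matrix n n A}
    (hM : ∀ v, v ᵥ* M = 0 → v = 0) {u : n → A} (hu : M *ᵥ u = 0) : u = 0 :=
  eq_zero_of_mulVec_eq_zero
    (fun hdet => by
      obtain ⟨v, hv, hvM⟩ := exists_vecMul_eq_zero_iff.mpr hdet
      exact hv (hM v hvM))
    hu

section

variable {R : Type*} [CommRing R]

namespace Module.Basis

variable {ι M : Type*} [AddCommGroup M] [Module R[X] M] (e : Basis ι R[X] M)

/-- The coordinates of the image of `x` in `M / X M ≅ R^ι`. -/
noncomputable def constCoeffs (x : M) : ι → R := fun i => (e.repr x i).coeff 0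

theorem constCoeffs_eq_zero_iff {x : M} :
    e.constCoeffs x = 0 ↔ ∃ c, x = (Polynomial.X : R[X]) • c := by
  constructor
  · intro hx
    refine ⟨e.repr.symm ((e.repr x).mapRange Polynomial.divX Polynomial.divX_zero),
      e.repr.injective ?_⟩
    ext i : 1
    have h0 : (e.repr x i).coeff 0 = 0 := congrFun hx i
    simp only [map_smul, LinearEquiv.apply_symm_apply, Finsupp.smul_apply,
      Finsupp.mapRange_apply, smul_eq_mul]
    conv_lhs => rw [← Polynomial.X_mul_divX_add (e.repr x i), h0, map_zero, add_zero]
  · rintro ⟨c, rfl⟩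
    funext i
    simp [constCoeffs]

theorem constCoeffs_self [DecidableEq ι] (i : ι) : e.constCoeffs (e i) = Pi.single i 1 := by
  funext k
  simp only [constCoeffs, repr_self, Finsupp.single_apply, Pi.single_apply, eq_comm]
  split_ifs <;> simp

theorem constCoeffs_sum_C_smul [Fintype ι] (v : ι → R) :
    e.constCoeffs (∑ i, Polynomial.C (v i) • e i) = v := by
  funext k
  rw [constCoeffs, e.repr_sum_self, Polynomial.coeff_C_zero]

end Module.Basis

section LaurentModule

variable {W : Type*} [AddCommGroup W] [Module R[T;T⁻¹] W] {j : R[T;T⁻¹] →ₐ[R] R[T;T⁻¹]}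
  (B : W →ₗ[R[T;T⁻¹]] W →ₛₗ[(j : R[T;T⁻¹] →+* R[T;T⁻¹])] R[T;T⁻¹])

theorem coeff_T_one_smul_left (a b : W) (m : ℤ) :
    (B ((T 1 : R[T;T⁻¹]) • a) b).coeff m = (B a b).coeff (m - 1) := by
  rw [map_smul, LinearMap.smul_apply, smul_eq_mul, coeff_T_mul]

theorem coeff_T_one_smul_right (hj : j (T 1) = -T 1) (a b : W) (m : ℤ) :
    (B a ((T 1 : R[T;T⁻¹]) • b)).coeff m = -(B a b).coeff (m - 1) := by
  rw [LinearMap.map_smulₛₗ, smul_eq_mul, AlgHom.coe_toRingHom, hj, neg_mul,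
    AddMonoidAlgebra.coeff_neg, Finsupp.neg_apply, coeff_T_mul]

theorem coeff_C_smul_left (c : R) (a b : W) (m : ℤ) :
    (B (C c • a) b).coeff m = c * (B a b).coeff m := by
  rw [map_smul, LinearMap.smul_apply, smul_eq_mul, ← smul_eq_C_mul,
    AddMonoidAlgebra.coeff_smul_apply, smul_eq_mul]

theorem coeff_C_smul_right (c : R) (a b : W) (m : ℤ) :
    (B a (C c • b)).coeff m = c * (B a b).coeff m := by
  rw [LinearMap.map_smulₛₗ, smul_eq_mul, AlgHom.coe_toRingHom, C_eq_algebraMap, AlgHom.commutes,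
    ← C_eq_algebraMap, ← smul_eq_C_mul, AddMonoidAlgebra.coeff_smul_apply, smul_eq_mul]

end LaurentModule

section Lattice

open Matrix

variable {W : Type*} [AddCommGroup W] [Module R[T;T⁻¹] W] [Module R[X] W]
  [IsScalarTower R[X] R[T;T⁻¹] W]

theorem Polynomial.toLaurent_smul (p : R[X]) (v : W) : toLaurent p • v = p • v := by
  rw [← algebraMap_eq_toLaurent, algebraMap_smul]

theorem Submodule.coe_X_smul (L : Submodule R[X] W) (c : L) :
    (((Polynomial.X : R[X]) • c : L) : W) = (T 1 : R[T;T⁻¹]) • (c : W) := by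
  rw [← Polynomial.toLaurent_X, Polynomial.toLaurent_smul]
  rfl

theorem T_natCast_smul_mem {L : Submodule R[X] W} {x : W} (hx : x ∈ L) (n : ℕ) :
    (T n : R[T;T⁻¹]) • x ∈ L := by
  rw [← Polynomial.toLaurent_X_pow, Polynomial.toLaurent_smul]
  exact L.smul_mem _ hx

theorem exists_T_natCast_smul_mem_of_span_eq_top {L : Submodule R[X] W}
    (hL : Submodule.span R[T;T⁻¹] (L : Set W) = ⊤) (σ : W) :
    ∃ n : ℕ, (T n : R[T;T⁻¹]) • σ ∈ L := by
  have shift {x : W} {n : ℕ} (hx : (T n : R[T;T⁻¹]) • x ∈ L) (m : ℕ) :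
      (T ↑(n + m) : R[T;T⁻¹]) • x ∈ L := by
    rw [Nat.cast_add, add_comm, T_add, mul_smul]
    exact T_natCast_smul_mem hx m
  induction (hL ▸ Submodule.mem_top : σ ∈ Submodule.span R[T;T⁻¹] (L : Set W))
    using Submodule.span_induction with
  | mem x hx => exact ⟨0, by simpa [T_zero] using hx⟩
  | zero => exact ⟨0, by simp⟩
  | add x y _ _ hx hy =>
    obtain ⟨n, hn⟩ := hx
    obtain ⟨m, hm⟩ := hy
    exact ⟨n + m, by rw [smul_add]; exact L.add_mem (shift hn m) (add_comm m n ▸ shift hm n)⟩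
  | smul f x _ hx =>
    obtain ⟨n, hn⟩ := hx
    obtain ⟨m, f', hf'⟩ := f.exists_T_pow
    refine ⟨n + m, ?_⟩
    have hclear : (T ↑(n + m) : R[T;T⁻¹]) • f • x
        = Polynomial.toLaurent f' • (T n : R[T;T⁻¹]) • x := by
      rw [smul_smul, smul_smul, hf', Nat.cast_add, T_add]
      ring_nf
    rw [hclear, Polynomial.toLaurent_smul]
    exact L.smul_mem f' hn

variable {j : R[T;T⁻¹] →ₐ[R] R[T;T⁻¹]}
  (B : W →ₗ[R[T;T⁻¹]] W →ₛₗ[(j : R[T;T⁻¹] →+* R[T;T⁻¹])] R[T;T⁻¹]) {L : Submodule R[X] W}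
  {w : ℤ}

theorem coeff_smul_left_of_mem (hBL : ∀ a ∈ L, ∀ b ∈ L, ∀ k < w, (B a b).coeff k = 0)
    (p : R[X]) {a b : W} (ha : a ∈ L) (hb : b ∈ L) :
    (B (p • a) b).coeff w = p.coeff 0 * (B a b).coeff w := by
  conv_lhs => rw [← Polynomial.X_mul_divX_add p, add_smul, mul_smul,
    ← Polynomial.toLaurent_smul Polynomial.X, ← Polynomial.toLaurent_smul (Polynomial.C _),
    Polynomial.toLaurent_X, Polynomial.toLaurent_C, map_add, LinearMap.add_apply,
    AddMonoidAlgebra.coeff_add, Finsupp.add_apply, coeff_T_one_smul_left, coeff_C_smul_left,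
    hBL _ (L.smul_mem _ ha) b hb _ (by omega), zero_add]

theorem coeff_smul_right_of_mem (hj : j (T 1) = -T 1)
    (hBL : ∀ a ∈ L, ∀ b ∈ L, ∀ k < w, (B a b).coeff k = 0)
    (p : R[X]) {a b : W} (ha : a ∈ L) (hb : b ∈ L) :
    (B a (p • b)).coeff w = p.coeff 0 * (B a b).coeff w := by
  conv_lhs => rw [← Polynomial.X_mul_divX_add p, add_smul, mul_smul,
    ← Polynomial.toLaurent_smul Polynomial.X, ← Polynomial.toLaurent_smul (Polynomial.C _),
    Polynomial.toLaurent_X, Polynomial.toLaurent_C, map_add, AddMonoidAlgebra.coeff_add,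
    Finsupp.add_apply, coeff_T_one_smul_right B hj, coeff_C_smul_right,
    hBL a ha _ (L.smul_mem _ hb) _ (by omega), neg_zero, zero_add]

section Basis

variable {ι : Type*} [Fintype ι] (e : Module.Basis ι R[X] L) (w)

noncomputable def coeffGramMatrix : Matrix ι ι R := Matrix.of fun i k => (B (e i) (e k)).coeff w

variable {B w}

theorem coeff_eq_sum_constCoeffs_left (hBL : ∀ a ∈ L, ∀ b ∈ L, ∀ k < w, (B a b).coeff k = 0)
    (x : L) {b : W} (hb : b ∈ L) :
    (B x b).coeff w = ∑ i, e.constCoeffs x i * (B (e i) b).coeff w := by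
  conv_lhs => rw [← e.sum_repr x]
  simp only [Submodule.coe_sum, Submodule.coe_smul, map_sum, LinearMap.sum_apply,
    AddMonoidAlgebra.coeff_sum, Finsupp.finsetSum_apply]
  exact Finset.sum_congr rfl fun i _ => coeff_smul_left_of_mem B hBL _ (e i).2 hb

theorem coeff_eq_sum_constCoeffs_right (hj : j (T 1) = -T 1)
    (hBL : ∀ a ∈ L, ∀ b ∈ L, ∀ k < w, (B a b).coeff k = 0) {a : W} (ha : a ∈ L) (y : L) :
    (B a y).coeff w = ∑ k, e.constCoeffs y k * (B a (e k)).coeff w := by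
  conv_lhs => rw [← e.sum_repr y]
  simp only [Submodule.coe_sum, Submodule.coe_smul, map_sum,
    AddMonoidAlgebra.coeff_sum, Finsupp.finsetSum_apply]
  exact Finset.sum_congr rfl fun k _ => coeff_smul_right_of_mem B hj hBL _ ha (e k).2

theorem coeff_eq_constCoeffs_dotProduct_mulVec (hj : j (T 1) = -T 1)
    (hBL : ∀ a ∈ L, ∀ b ∈ L, ∀ k < w, (B a b).coeff k = 0) (x y : L) :
    (B x y).coeff w = e.constCoeffs x ⬝ᵥ (coeffGramMatrix B w e *ᵥ e.constCoeffs y) := by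
  simp only [coeff_eq_sum_constCoeffs_left e hBL x y.2,
    coeff_eq_sum_constCoeffs_right e hj hBL (e _).2 y, dotProduct, mulVec, coeffGramMatrix,
    Matrix.of_apply, mul_comm (e.constCoeffs y _)]

theorem eq_zero_of_vecMul_coeffGramMatrix_eq_zero (hj : j (T 1) = -T 1)
    (hBL : ∀ a ∈ L, ∀ b ∈ L, ∀ k < w, (B a b).coeff k = 0)
    (hnd : ∀ a ∈ L, (∀ b ∈ L, (B a b).coeff w = 0) → ∃ c ∈ L, a = (T 1 : R[T;T⁻¹]) • c)
    {v : ι → R} (hv : v ᵥ* coeffGramMatrix B w e = 0) : v = 0 := by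
  set a : L := ∑ i, Polynomial.C (v i) • e i
  have ha : ∀ b ∈ L, (B a b).coeff w = 0 := fun b hb => by
    rw [show b = ((⟨b, hb⟩ : L) : W) from rfl, coeff_eq_constCoeffs_dotProduct_mulVec e hj hBL,
      e.constCoeffs_sum_C_smul, dotProduct_mulVec, hv, zero_dotProduct]
  obtain ⟨c, hc, hac⟩ := hnd a a.2 ha
  rw [← e.constCoeffs_sum_C_smul v, e.constCoeffs_eq_zero_iff]
  exact ⟨⟨c, hc⟩, Subtype.ext (hac.trans (L.coe_X_smul ⟨c, hc⟩).symm)⟩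

end Basis

variable {B}

theorem exists_eq_T_one_smul_of_forall_coeff_eq_zero [IsDomain R] [Module.Free R[X] L]
    [Module.Finite R[X] L] (hj : j (T 1) = -T 1)
    (hBL : ∀ a ∈ L, ∀ b ∈ L, ∀ k < w, (B a b).coeff k = 0)
    (hnd : ∀ a ∈ L, (∀ b ∈ L, (B a b).coeff w = 0) → ∃ c ∈ L, a = (T 1 : R[T;T⁻¹]) • c)
    {τ : W} (hτ : τ ∈ L) (hτ0 : ∀ b ∈ L, (B b τ).coeff w = 0) :
    ∃ c ∈ L, τ = (T 1 : R[T;T⁻¹]) • c := by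
  classical
  let e := Module.Free.chooseBasis R[X] L
  have hG : coeffGramMatrix B w e *ᵥ e.constCoeffs ⟨τ, hτ⟩ = 0 := by
    funext i
    rw [Pi.zero_apply, ← single_one_dotProduct i (coeffGramMatrix B w e *ᵥ _),
      ← e.constCoeffs_self, ← coeff_eq_constCoeffs_dotProduct_mulVec e hj hBL]
    exact hτ0 _ (e i).2
  obtain ⟨c, hc⟩ := e.constCoeffs_eq_zero_iff.mp <| eq_zero_of_mulVec_eq_zero_of_forall_vecMul
    (fun _ => eq_zero_of_vecMul_coeffGramMatrix_eq_zero e hj hBL hnd) hG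
  exact ⟨c, c.2, by rw [← L.coe_X_smul, ← hc]⟩

theorem forall_coeff_T_one_smul_eq_zero (hj : j (T 1) = -T 1) {σ : W}
    (hσ : ∀ a ∈ L, (B a σ).coeff (w - 1) = 0) :
    ∀ a ∈ L, (B a ((T 1 : R[T;T⁻¹]) • σ)).coeff (w - 1) = 0 := by
  intro a ha
  rw [coeff_T_one_smul_right B hj, ← coeff_T_one_smul_left,
    hσ _ (by simpa using T_natCast_smul_mem ha 1), neg_zero]

variable [IsDomain R] [Module.Free R[X] L] [Module.Finite R[X] L]

theorem mem_of_T_one_smul_mem (hj : j (T 1) = -T 1)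
    (hBL : ∀ a ∈ L, ∀ b ∈ L, ∀ k < w, (B a b).coeff k = 0)
    (hnd : ∀ a ∈ L, (∀ b ∈ L, (B a b).coeff w = 0) → ∃ c ∈ L, a = (T 1 : R[T;T⁻¹]) • c)
    {σ : W} (hσ : ∀ a ∈ L, (B a σ).coeff (w - 1) = 0) (hmem : (T 1 : R[T;T⁻¹]) • σ ∈ L) :
    σ ∈ L := by
  obtain ⟨c, hc, hσc⟩ := exists_eq_T_one_smul_of_forall_coeff_eq_zero hj hBL hnd hmem
    fun b hb => by rw [coeff_T_one_smul_right B hj, hσ b hb, neg_zero]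
  rwa [(isUnit_T 1).smul_left_cancel.mp hσc]

theorem mem_of_T_natCast_smul_mem (hj : j (T 1) = -T 1)
    (hBL : ∀ a ∈ L, ∀ b ∈ L, ∀ k < w, (B a b).coeff k = 0)
    (hnd : ∀ a ∈ L, (∀ b ∈ L, (B a b).coeff w = 0) → ∃ c ∈ L, a = (T 1 : R[T;T⁻¹]) • c)
    (n : ℕ) {σ : W} (hσ : ∀ a ∈ L, (B a σ).coeff (w - 1) = 0)
    (hmem : (T n : R[T;T⁻¹]) • σ ∈ L) : σ ∈ L := by
  induction n generalizing σ with
  | zero => simpa [T_zero] using hmem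
  | succ n ih =>
    rw [Nat.cast_succ, T_add, mul_smul] at hmem
    exact mem_of_T_one_smul_mem hj hBL hnd hσ
      (ih (forall_coeff_T_one_smul_eq_zero hj hσ) hmem)

end Lattice

end

theorem stmt_6_general (μ : ℕ) (w : ℤ)
    (W : Type*) [AddCommGroup W] [Module (LaurentPolynomial ℂ) W]
    [Module (Polynomial ℂ) W] [IsScalarTower (Polynomial ℂ) (LaurentPolynomial ℂ) W]
    (L : Submodule (Polynomial ℂ) W)
    (hLfree : Nonempty (Module.Basis (Fin μ) (Polynomial ℂ) L))
    (hLgen : Submodule.span (LaurentPolynomial ℂ) (L : Set W) = ⊤)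
    (j : LaurentPolynomial ℂ →ₐ[ℂ] LaurentPolynomial ℂ)
    (hj : j (T 1) = -T 1)
    (P : W → W → LaurentPolynomial ℂ)
    (hPadd₁ : ∀ a a' b : W, P (a + a') b = P a b + P a' b)
    (hPadd₂ : ∀ a b b' : W, P a (b + b') = P a b + P a b')
    (hPsmul₁ : ∀ (f : LaurentPolynomial ℂ) (a b : W), P (f • a) b = f * P a b)
    (hPsmul₂ : ∀ (f : LaurentPolynomial ℂ) (a b : W), P a (f • b) = j f * P a b)
    (hPL : ∀ a ∈ L, ∀ b ∈ L, ∀ k : ℤ, k < w → (P a b).coeff k = 0)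
    (hPnd : ∀ a ∈ L, (∀ b ∈ L, (P a b).coeff w = 0) →
      ∃ c ∈ L, a = (T 1 : LaurentPolynomial ℂ) • c) :
    (L : Set W) = {σ : W | ∀ a ∈ L, (P a σ).coeff (w - 1) = 0} := by
  obtain ⟨e⟩ := hLfree
  have := Module.Free.of_basis e
  have := Module.Finite.of_basis e
  let B : W →ₗ[ℂ[T;T⁻¹]] W →ₛₗ[(j : ℂ[T;T⁻¹] →+* ℂ[T;T⁻¹])] ℂ[T;T⁻¹] :=
    LinearMap.mk₂'ₛₗ _ _ P hPadd₁ hPsmul₁ hPadd₂ hPsmul₂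
  ext σ
  refine ⟨fun hσ a ha => hPL a ha σ hσ _ (by omega), fun hσ => ?_⟩
  obtain ⟨n, hn⟩ := exists_T_natCast_smul_mem_of_span_eq_top hLgen σ
  exact mem_of_T_natCast_smul_mem (B := B) hj hPL hPnd n hσ hn

/-- Let `W` be a free `ℂ[z,z⁻¹]`-module of rank `μ`, `L ⊆ W` a
`ℂ[z]`-submodule which is free of rank `μ` over `ℂ[z]` and generates `W` over `ℂ[z,z⁻¹]`,
and `P : W × W → ℂ[z,z⁻¹]` a pairing which is `ℂ[z,z⁻¹]`-linear in the first argument and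
`j`-semilinear in the second, where `j` is the `ℂ`-algebra automorphism with `j(z) = -z`.
Assume `P(L × L) ⊆ z^w·ℂ[z]` and that the induced `ℂ`-bilinear form `P^{(w)}` on `L/zL` is
nondegenerate.  Then `L = {σ ∈ W | P^{(w-1)}(a, σ) = 0 for all a ∈ L}`.

Coefficients of Laurent polynomials are accessed by evaluation: `(P a b) k` is the
coefficient of `z^k` in `P(a,b)`. -/
theorem stmt_6 (μ : ℕ) (hμ : 1 ≤ μ) (w : ℤ)
    (W : Type*) [AddCommGroup W] [Module (LaurentPolynomial ℂ) W]
    [Module (Polynomial ℂ) W] [IsScalarTower (Polynomial ℂ) (LaurentPolynomial ℂ) W]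
    (hWfree : Nonempty (Module.Basis (Fin μ) (LaurentPolynomial ℂ) W))
    (L : Submodule (Polynomial ℂ) W)
    (hLfree : Nonempty (Module.Basis (Fin μ) (Polynomial ℂ) L))
    (hLgen : Submodule.span (LaurentPolynomial ℂ) (L : Set W) = ⊤)
    (j : LaurentPolynomial ℂ →ₐ[ℂ] LaurentPolynomial ℂ)
    (hj : j (T 1) = -T 1)
    (P : W → W → LaurentPolynomial ℂ)
    (hPadd₁ : ∀ a a' b : W, P (a + a') b = P a b + P a' b)
    (hPadd₂ : ∀ a b b' : W, P a (b + b') = P a b + P a b')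
    (hPsmul₁ : ∀ (f : LaurentPolynomial ℂ) (a b : W), P (f • a) b = f * P a b)
    (hPsmul₂ : ∀ (f : LaurentPolynomial ℂ) (a b : W), P a (f • b) = j f * P a b)
    (hPL : ∀ a ∈ L, ∀ b ∈ L, ∀ k : ℤ, k < w → (P a b).coeff k = 0)
    (hPnd : ∀ a ∈ L, (∀ b ∈ L, (P a b).coeff w = 0) →
      ∃ c ∈ L, a = (T 1 : LaurentPolynomial ℂ) • c) :
    (L : Set W) = {σ : W | ∀ a ∈ L, (P a σ).coeff (w - 1) = 0} :=
  stmt_6_general μ w W L hLfree hLgen j hj P hPadd₁ hPadd₂ hPsmul₁ hPsmul₂ hPL hPnd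
end

section
/- Suppose F₀ is adapted to N and W, F satisfies N(F^p) ⊆ F^{p-1} for all p, and the spectral pairs of F and F₀ agree, i.e. dim_ℂ(F^p Gr^W_l / F^{p+1} Gr^W_l) = dim_ℂ(F₀^p Gr^W_l / F₀^{p+1} Gr^W_l) for all p, l ∈ ℤ. Then F is adapted to N and W, and moreover dim_ℂ((F^p Gr^W_l) ∩ P_l) = dim_ℂ((F₀^p Gr^W_l) ∩ P_l) for all p ∈ ℤ and all l ≥ 0. -/
/-- The preimage in `W_m` of the primitive part `P_m = (Gr^W_m)_prim = ker(N̄^{m+1})`.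
For `m ≥ 0` an element `x ∈ W m` represents a primitive class iff `N^{m+1} x ∈ W (-m-3)`;
for `m < 0` the primitive part is `0` by convention. -/
noncomputable def primPre {V : Type*} [AddCommGroup V] [Module ℂ V]
    (N : Module.End ℂ V) (W : ℤ → Submodule ℂ V) (m : ℤ) : Submodule ℂ V :=
  if 0 ≤ m then W m ⊓ (W (-m - 3)).comap (N ^ (m + 1).toNat) else ⊥

/-- The preimage in `W_l` of the induced filtration step
`F^p Gr^W_l = ((F^p ∩ W_l) + W_{l-1})/W_{l-1}` of the graded piece `Gr^W_l`. -/
noncomputable def grF {V : Type*} [AddCommGroup V] [Module ℂ V]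
    (F W : ℤ → Submodule ℂ V) (p l : ℤ) : Submodule ℂ V :=
  (F p ⊓ W l) ⊔ W (l - 1)

/-- `F` is adapted to `N` and `W`: condition (a) `N(F^p) ⊆ F^{p-1}`; condition (b)
`(F^p Gr^W_{l-2j}) ∩ N̄^j(P_l) = N̄^j((F^{p+j} Gr^W_l) ∩ P_l)` for `0 ≤ j ≤ l`; condition
(c) `F^p Gr^W_l = ⊕_{j≥0} ((F^p Gr^W_l) ∩ N̄^j(P_{l+2j}))` (spanning plus directness).
All subspaces of `Gr^W_l = W_l/W_{l-1}` are expressed via their full preimages in `W_l`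
(which all contain `W_{l-1}`). -/
noncomputable def AdaptedFilt {V : Type*} [AddCommGroup V] [Module ℂ V]
    (N : Module.End ℂ V) (W F : ℤ → Submodule ℂ V) : Prop :=
  (∀ p : ℤ, ∀ x ∈ F p, N x ∈ F (p - 1)) ∧
  (∀ l j : ℕ, j ≤ l → ∀ p : ℤ,
    grF F W p ((l : ℤ) - 2 * j) ⊓
      ((primPre N W (l : ℤ)).map (N ^ j) ⊔ W ((l : ℤ) - 2 * j - 1)) =
    ((grF F W (p + j) (l : ℤ) ⊓ primPre N W (l : ℤ)).map (N ^ j)) ⊔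
      W ((l : ℤ) - 2 * j - 1)) ∧
  (∀ p l : ℤ,
    grF F W p l = W (l - 1) ⊔
      ⨆ j : ℕ, (grF F W p l ⊓ ((primPre N W (l + 2 * j)).map (N ^ j) ⊔ W (l - 1)))) ∧
  (∀ p l : ℤ, ∀ j : ℕ,
    (grF F W p l ⊓ ((primPre N W (l + 2 * j)).map (N ^ j) ⊔ W (l - 1))) ⊓
      (W (l - 1) ⊔ ⨆ (j' : ℕ) (_ : j' ≠ j),
        (grF F W p l ⊓ ((primPre N W (l + 2 * j')).map (N ^ j') ⊔ W (l - 1))))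
      ≤ W (l - 1))

/-!
Equal spectral pairs give `dim F^p Gr^W_l = dim F₀^p Gr^W_l` for all `p` and `l`. The Lefschetz
decomposition `Gr^W_l = ⊕_j N̄^j P_{l+2j}` is direct for every weight filtration, so for any `F`
with `N F^p ⊆ F^{p-1}` the pieces
`N̄^j (F^{p+j} Gr^W_{l+2j} ∩ P_{l+2j}) ⊆ F^p Gr^W_l ∩ N̄^j P_{l+2j}`
have total dimension at most `dim F^p Gr^W_l`, with equality everywhere when `F` is adapted.
Rank–nullity for `N̄^{m+1} : F^p Gr^W_m → F^{p-m-1} Gr^W_{-m-2}`, whose kernel is the primitive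
part and which is onto when `F` is adapted, shows that the primitive dimensions of `F` are at
least those of `F₀`. Hence the dimension count for `F` is squeezed between two equal numbers,
and every inclusion in it is an equality: these are conditions (b) and (c) for `F`, and the
equality of primitive dimensions.
-/

open Module Submodule

section RelFinrank

variable {K V : Type*} [Field K] [AddCommGroup V] [Module K V]

/-- The dimension of `A` modulo `B`, i.e. of `(A + B) / B`. -/
noncomputable def relFinrank (A B : Submodule K V) : ℕ := finrank K (A.map B.mkQ)

theorem finrank_quotient_comap_subtype (A B : Submodule K V) :
    finrank K (A ⧸ B.comap A.subtype) = relFinrank A B := by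
  have hker : LinearMap.ker (B.mkQ ∘ₗ A.subtype) = B.comap A.subtype := by
    rw [LinearMap.ker_comp, ker_mkQ]
  have hrange : LinearMap.range (B.mkQ ∘ₗ A.subtype) = A.map B.mkQ := by
    rw [LinearMap.range_comp, range_subtype]
  rw [relFinrank, ← hrange, ← hker]
  exact (LinearMap.quotKerEquivRange _).finrank_eq

theorem relFinrank_sup_right (A B : Submodule K V) : relFinrank (A ⊔ B) B = relFinrank A B := by
  rw [relFinrank, Submodule.map_sup, mkQ_map_self, sup_bot_eq, relFinrank]

theorem relFinrank_eq_zero_of_le {A B : Submodule K V} (h : A ≤ B) : relFinrank A B = 0 := by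
  have hbot : A.map B.mkQ = ⊥ := by
    rwa [eq_bot_iff, map_le_iff_le_comap, comap_bot, ker_mkQ]
  rw [relFinrank, hbot, finrank_bot]

theorem disjoint_map_mkQ_iff (A B C : Submodule K V) :
    Disjoint (A.map C.mkQ) (B.map C.mkQ) ↔ (C ⊔ A) ⊓ (C ⊔ B) ≤ C := by
  rw [disjoint_iff, ← (comap_injective_of_surjective C.mkQ_surjective).eq_iff, comap_inf,
    comap_map_mkQ, comap_map_mkQ, comap_bot, ker_mkQ]
  exact ⟨le_of_eq, fun h => le_antisymm h (le_inf le_sup_left le_sup_left)⟩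

theorem inf_sup_iSup_ne_le_of_iSupIndep {ι : Type*} {B : Submodule K V} {D : ι → Submodule K V}
    (hD : iSupIndep fun i => (D i).map B.mkQ) (i : ι) :
    D i ⊓ (B ⊔ ⨆ (j) (_ : j ≠ i), D j) ≤ B := by
  have hdisj := (disjoint_map_mkQ_iff (D i) (⨆ (j) (_ : j ≠ i), D j) B).1 (by
    simpa only [Submodule.map_iSup] using hD i)
  exact (inf_le_inf_right _ le_sup_right).trans hdisj

variable [FiniteDimensional K V]

theorem relFinrank_mono {A A' : Submodule K V} (B : Submodule K V) (h : A ≤ A') :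
    relFinrank A B ≤ relFinrank A' B :=
  finrank_mono (map_mono h)

theorem relFinrank_add_finrank {A B : Submodule K V} (h : B ≤ A) :
    relFinrank A B + finrank K B = finrank K A := by
  rw [← finrank_quotient_comap_subtype, ← (comapSubtypeEquivOfLe h).finrank_eq,
    finrank_quotient_add_finrank]

/-- Rank–nullity for the map `A / B → V' / B'` induced by `f`. -/
theorem relFinrank_eq_add_relFinrank_inf_comap {V' : Type*} [AddCommGroup V'] [Module K V']
    [FiniteDimensional K V'] {A B : Submodule K V} {B' : Submodule K V'} (f : V →ₗ[K] V')
    (hBA : B ≤ A) (hf : B.map f ≤ B') :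
    relFinrank A B = relFinrank (A.map f) B' + relFinrank (A ⊓ B'.comap f) B := by
  have hB : B ≤ B'.comap f := map_le_iff_le_comap.1 hf
  have key := LinearMap.finrank_range_add_finrank_ker ((B'.mkQ ∘ₗ f).domRestrict A)
  rw [LinearMap.range_domRestrict, LinearMap.ker_domRestrict, LinearMap.ker_comp, ker_mkQ,
    map_comp, ← finrank_map_subtype_eq, map_comap_subtype] at key
  have hA := relFinrank_add_finrank hBA
  have hker := relFinrank_add_finrank (le_inf hBA hB)
  rw [relFinrank, relFinrank, relFinrank] at *
  omega

theorem eq_of_le_of_relFinrank_eq {A A' B : Submodule K V} (h : A ≤ A') (hB : B ≤ A)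
    (hr : relFinrank A B = relFinrank A' B) : A = A' := by
  have hmap : A.map B.mkQ = A'.map B.mkQ := eq_of_le_of_finrank_eq (map_mono h) hr
  rw [← sup_eq_right.2 hB, ← sup_eq_right.2 (hB.trans h), ← comap_map_mkQ, ← comap_map_mkQ, hmap]

theorem finrank_biSup_eq_sum {ι : Type*} {X : ι → Submodule K V} (hX : iSupIndep X)
    (s : Finset ι) : finrank K ↥(⨆ i ∈ s, X i) = ∑ i ∈ s, finrank K (X i) := by
  classical
  induction s using Finset.induction with
  | empty => simp
  | insert i s hi ih =>
    have hdisj : Disjoint (X i) (⨆ j ∈ s, X j) := by simpa using hX.disjoint_biSup (y := ↑s) hi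
    have := finrank_sup_add_finrank_inf_eq (X i) (⨆ j ∈ s, X j)
    rw [hdisj.eq_bot, finrank_bot] at this
    rw [Finset.iSup_insert, Finset.sum_insert hi, ← ih]
    omega

theorem relFinrank_sup_biSup_eq_sum {ι : Type*} {B : Submodule K V} {D : ι → Submodule K V}
    (hD : iSupIndep fun i => (D i).map B.mkQ) (s : Finset ι) :
    relFinrank (B ⊔ ⨆ i ∈ s, D i) B = ∑ i ∈ s, relFinrank (D i) B := by
  rw [sup_comm, relFinrank_sup_right, relFinrank, (gc_map_comap B.mkQ).l_iSup₂]
  exact finrank_biSup_eq_sum hD s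

end RelFinrank

theorem pow_apply_mem_of_forall_mem {K V : Type*} [Field K] [AddCommGroup V] [Module K V]
    {G : ℤ → Submodule K V} {f : Module.End K V} {d : ℤ} (h : ∀ l, ∀ x ∈ G l, f x ∈ G (l - d))
    (j : ℕ) {l m : ℤ} (hm : m = l - j * d) {x : V} (hx : x ∈ G l) : (f ^ j) x ∈ G m := by
  subst hm
  induction j with
  | zero => simpa using hx
  | succ j ih =>
    rw [pow_succ', Module.End.mul_apply]
    convert h _ _ ih using 2
    push_cast
    ring

section Weight

variable {V : Type*} [AddCommGroup V] [Module ℂ V] {N : Module.End ℂ V} {W : ℤ → Submodule ℂ V}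
  (hmono : Monotone W) (hshift : ∀ l : ℤ, ∀ x ∈ W l, N x ∈ W (l - 2))
  (hisoinj : ∀ l : ℕ, ∀ x ∈ W (l : ℤ), (N ^ l) x ∈ W (-(l : ℤ) - 1) → x ∈ W ((l : ℤ) - 1))

include hshift in
theorem map_pow_weight_le (j : ℕ) {l m : ℤ} (hm : m = l - 2 * j) : (W l).map (N ^ j) ≤ W m :=
  map_le_iff_le_comap.2 fun _ hx => pow_apply_mem_of_forall_mem hshift j (by rw [hm]; ring) hx

theorem primPre_le (m : ℤ) : primPre N W m ≤ W m := by
  unfold primPre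
  split_ifs
  exacts [inf_le_left, bot_le]

include hmono hshift in
theorem le_primPre {m : ℤ} (hm : 0 ≤ m) : W (m - 1) ≤ primPre N W m := by
  rw [primPre, if_pos hm]
  exact le_inf (hmono (by omega))
    (map_le_iff_le_comap.1 (map_pow_weight_le hshift _ (by omega)))

include hshift in
theorem map_pow_primPre_le {m : ℤ} {k : ℕ} (hk : m < k) :
    (primPre N W m).map (N ^ k) ≤ W (m - 2 * k - 1) := by
  unfold primPre
  split_ifs with hm
  · have hsplit : N ^ k = N ^ (k - (m + 1).toNat) * N ^ (m + 1).toNat := by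
      rw [← pow_add]; congr 1; omega
    rw [hsplit, Module.End.mul_eq_comp, map_comp]
    exact (map_mono (map_le_iff_le_comap.2 inf_le_right)).trans
      (map_pow_weight_le hshift _ (by omega))
  · simp

include hisoinj in
theorem mem_of_pow_apply_mem {m : ℤ} {k : ℕ} (hk : (k : ℤ) = m) {x : V} (hx : x ∈ W m)
    (h : (N ^ k) x ∈ W (-m - 1)) : x ∈ W (m - 1) := by
  subst hk
  exact hisoinj k x hx h

include hshift hisoinj in
theorem mem_of_pow_apply_mem_of_nonneg {l : ℤ} {j : ℕ} (hlj : 0 ≤ l + j) {x : V}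
    (hx : x ∈ W (l + 2 * j)) (h : (N ^ j) x ∈ W (l - 1)) : x ∈ W (l + 2 * j - 1) := by
  refine mem_of_pow_apply_mem hisoinj (k := (l + j).toNat + j) (by omega) hx ?_
  rw [pow_add, Module.End.mul_apply]
  exact map_pow_weight_le hshift _ (by omega) (mem_map_of_mem h)

variable (N W) in
/-- The preimage in `W l` of `N̄^j P_{l+2j} ⊆ Gr^W_l`. -/
noncomputable def lefschetzPiece (l : ℤ) (j : ℕ) : Submodule ℂ V :=
  (primPre N W (l + 2 * j)).map (N ^ j) ⊔ W (l - 1)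

theorem le_lefschetzPiece (l : ℤ) (j : ℕ) : W (l - 1) ≤ lefschetzPiece N W l j :=
  le_sup_right

include hshift in
theorem lefschetzPiece_of_neg {l : ℤ} {j : ℕ} (h : l + j < 0) :
    lefschetzPiece N W l j = W (l - 1) :=
  sup_eq_right.2 ((map_pow_primPre_le hshift (by omega)).trans_eq (by congr 1; ring))

theorem lefschetzPiece_of_pow_eq_zero {l : ℤ} {j : ℕ} (h : N ^ j = 0) :
    lefschetzPiece N W l j = W (l - 1) := by
  simp [lefschetzPiece, h]

include hshift in
theorem map_pow_lefschetzPiece_le {l : ℤ} {n j e : ℕ} (he : (e : ℤ) = l + n) (hj : j < n) :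
    (lefschetzPiece N W l j).map (N ^ e) ≤ W (-l - 2 * n - 1) := by
  rw [lefschetzPiece, Submodule.map_sup, ← map_comp, ← Module.End.mul_eq_comp, ← pow_add]
  exact sup_le ((map_pow_primPre_le hshift (by omega)).trans_eq (by congr 1; omega))
    (map_pow_weight_le hshift e (by omega))

include hshift hisoinj in
theorem lefschetzPiece_inf_comap_le {l : ℤ} {n e : ℕ} (he : (e : ℤ) = l + n) :
    lefschetzPiece N W l n ⊓ (W (-l - 2 * n - 1)).comap (N ^ e) ≤ W (l - 1) := by
  rintro _ ⟨hx, hNx⟩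
  obtain ⟨_, ⟨y, hy, rfl⟩, w, hw, rfl⟩ := mem_sup.1 hx
  have hNw : (N ^ e) w ∈ W (-l - 2 * n - 1) :=
    map_pow_weight_le hshift e (by omega) (mem_map_of_mem hw)
  have hNy : (N ^ (e + n)) y ∈ W (-(l + 2 * n) - 1) := by
    have := sub_mem (mem_comap.1 hNx) hNw
    rw [map_add, add_sub_cancel_right, ← Module.End.mul_apply, ← pow_add] at this
    convert this using 2
    ring
  have hy' := mem_of_pow_apply_mem hisoinj (by push_cast; omega) (primPre_le _ hy) hNy
  exact add_mem (map_pow_weight_le hshift n (by ring) (mem_map_of_mem hy')) hw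

include hshift hisoinj in
/-- Modulo `W (-l-2n-1)`, the power `N^{l+n}` kills the pieces with `j < n` and is injective on
the `n`-th one. -/
theorem disjoint_lefschetzPiece_biSup (l : ℤ) (n : ℕ) :
    Disjoint ((lefschetzPiece N W l n).map (W (l - 1)).mkQ)
      (⨆ j ∈ Finset.range n, (lefschetzPiece N W l j).map (W (l - 1)).mkQ) := by
  rw [← (gc_map_comap _).l_iSup₂, disjoint_map_mkQ_iff, sup_eq_right.2 (le_lefschetzPiece l n)]
  rcases lt_or_ge (l + n) 0 with h | h
  · rw [lefschetzPiece_of_neg hshift h]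
    exact inf_le_left
  · obtain ⟨e, he⟩ : ∃ e : ℕ, (e : ℤ) = l + n := ⟨(l + n).toNat, by omega⟩
    refine le_trans (inf_le_inf_left _ ?_) (lefschetzPiece_inf_comap_le hshift hisoinj he)
    rw [← map_le_iff_le_comap, Submodule.map_sup, (gc_map_comap _).l_iSup₂]
    exact sup_le (map_pow_weight_le hshift e (by omega))
      (iSup₂_le fun j hj => map_pow_lefschetzPiece_le hshift he (Finset.mem_range.1 hj))

include hshift hisoinj in
theorem iSupIndep_lefschetzPiece (l : ℤ) :
    iSupIndep fun j => (lefschetzPiece N W l j).map (W (l - 1)).mkQ := by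
  classical
  have hrange : ∀ n, (Finset.range n).SupIndep
      fun j => (lefschetzPiece N W l j).map (W (l - 1)).mkQ := by
    intro n
    induction n with
    | zero => exact Finset.supIndep_empty _
    | succ n ih =>
      rw [Finset.range_add_one]
      exact ih.insert (by
        rw [Finset.sup_eq_iSup]
        exact disjoint_lefschetzPiece_biSup hshift hisoinj l n)
  rw [iSupIndep_iff_supIndep]
  intro s
  obtain ⟨n, hn⟩ := s.exists_nat_subset_range
  exact (hrange n).subset hn

end Weight

section Filtration

variable {V : Type*} [AddCommGroup V] [Module ℂ V] {N : Module.End ℂ V}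
  {W G : ℤ → Submodule ℂ V}
  (hmono : Monotone W) (hshift : ∀ l : ℤ, ∀ x ∈ W l, N x ∈ W (l - 2))
  (hisoinj : ∀ l : ℕ, ∀ x ∈ W (l : ℤ), (N ^ l) x ∈ W (-(l : ℤ) - 1) → x ∈ W ((l : ℤ) - 1))
  (hGN : ∀ p : ℤ, ∀ x ∈ G p, N x ∈ G (p - 1))

include hmono in
theorem grF_le (p l : ℤ) : grF G W p l ≤ W l :=
  sup_le inf_le_right (hmono (by omega))

theorem le_grF (p l : ℤ) : W (l - 1) ≤ grF G W p l :=
  le_sup_right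

theorem grF_of_eq_bot {p : ℤ} (h : G p = ⊥) (l : ℤ) : grF G W p l = W (l - 1) := by
  simp [grF, h]

theorem grF_anti (hG : Antitone G) {p q : ℤ} (hpq : p ≤ q) (l : ℤ) :
    grF G W q l ≤ grF G W p l :=
  sup_le_sup_right (inf_le_inf_right _ (hG hpq)) _

include hshift hGN in
theorem map_pow_grF_le (j : ℕ) {p l q m : ℤ} (hp : p = q + j) (hl : l = m + 2 * j) :
    (grF G W p l).map (N ^ j) ≤ grF G W q m := by
  rw [grF, Submodule.map_sup]
  refine sup_le_sup (map_le_iff_le_comap.2 fun x hx => ⟨?_, ?_⟩)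
    (map_pow_weight_le hshift j (by omega))
  · exact pow_apply_mem_of_forall_mem hGN j (by omega) hx.1
  · exact pow_apply_mem_of_forall_mem hshift j (by omega) hx.2

variable (N W G) in
/-- The preimage in `W l` of `(G^p Gr^W_l) ∩ N̄^j P_{l+2j}`. -/
noncomputable def filtLefschetzPiece (p l : ℤ) (j : ℕ) : Submodule ℂ V :=
  grF G W p l ⊓ lefschetzPiece N W l j

variable (N W G) in
/-- The preimage in `W l` of `N̄^j ((G^{p+j} Gr^W_{l+2j}) ∩ P_{l+2j})`. -/
noncomputable def primImage (p l : ℤ) (j : ℕ) : Submodule ℂ V :=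
  (grF G W (p + j) (l + 2 * j) ⊓ primPre N W (l + 2 * j)).map (N ^ j) ⊔ W (l - 1)

theorem le_primImage (p l : ℤ) (j : ℕ) : W (l - 1) ≤ primImage N W G p l j :=
  le_sup_right

theorem primImage_le_lefschetzPiece (p l : ℤ) (j : ℕ) :
    primImage N W G p l j ≤ lefschetzPiece N W l j :=
  sup_le_sup_right (map_mono inf_le_right) _

include hshift hGN in
theorem primImage_le_filtLefschetzPiece (p l : ℤ) (j : ℕ) :
    primImage N W G p l j ≤ filtLefschetzPiece N W G p l j :=
  le_inf (sup_le ((map_mono inf_le_left).trans (map_pow_grF_le hshift hGN j rfl rfl)) (le_grF p l))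
    (primImage_le_lefschetzPiece p l j)

theorem AdaptedFilt.grF_eq (hG : AdaptedFilt N W G) (p l : ℤ) :
    grF G W p l = W (l - 1) ⊔ ⨆ j : ℕ, filtLefschetzPiece N W G p l j :=
  hG.2.2.1 p l

theorem AdaptedFilt.filtLefschetzPiece_eq_primImage (hG : AdaptedFilt N W G) {l : ℤ} {j : ℕ}
    (hlj : 0 ≤ l + j) (p : ℤ) : filtLefschetzPiece N W G p l j = primImage N W G p l j := by
  obtain ⟨L, hL⟩ : ∃ L : ℕ, (L : ℤ) = l + 2 * j := ⟨(l + 2 * j).toNat, by omega⟩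
  have hb := hG.2.1 L j (by omega) p
  rw [hL, add_sub_cancel_right] at hb
  exact hb

include hshift in
theorem AdaptedFilt.filtLefschetzPiece_le_primImage (hG : AdaptedFilt N W G) (p l : ℤ) (j : ℕ) :
    filtLefschetzPiece N W G p l j ≤ primImage N W G p l j := by
  rcases lt_or_ge (l + j) 0 with h | h
  · exact inf_le_right.trans ((lefschetzPiece_of_neg hshift h).trans_le (le_primImage p l j))
  · exact (hG.filtLefschetzPiece_eq_primImage h p).le

include hshift hisoinj hGN in
theorem adaptedFilt_of_lefschetz
    (hb : ∀ p l : ℤ, ∀ j : ℕ, 0 ≤ l + j →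
      filtLefschetzPiece N W G p l j = primImage N W G p l j)
    (hc : ∀ p l : ℤ, grF G W p l = W (l - 1) ⊔ ⨆ j : ℕ, filtLefschetzPiece N W G p l j) :
    AdaptedFilt N W G := by
  refine ⟨hGN, fun l j hj p => ?_, hc, fun p l j => ?_⟩
  · have h := hb p (l - 2 * j) j (by omega)
    simp only [filtLefschetzPiece, lefschetzPiece, primImage, sub_add_cancel] at h
    exact h
  · exact inf_sup_iSup_ne_le_of_iSupIndep
      ((iSupIndep_lefschetzPiece hshift hisoinj l).mono fun j => map_mono inf_le_right) j

include hshift hGN in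
theorem primImage_le_sup_map_pow_grF {m : ℤ} (hm : 0 ≤ m) (p : ℤ) (j : ℕ) :
    primImage N W G (p - m - 1) (-m - 2) j ≤
      (grF G W p m).map (N ^ (m + 1).toNat) ⊔ W (-m - 3) := by
  have hW : W (-m - 2 - 1) = W (-m - 3) := congrArg W (by ring)
  rcases lt_or_ge (j : ℤ) (m + 2) with hj | hj
  · have h := primImage_le_lefschetzPiece (N := N) (W := W) (G := G) (p - m - 1) (-m - 2) j
    rw [lefschetzPiece_of_neg hshift (by omega), hW] at h
    exact h.trans le_sup_right
  · have hsplit : N ^ j = N ^ (m + 1).toNat * N ^ (j - (m + 1).toNat) := by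
      rw [← pow_add]; congr 1; omega
    refine sup_le ?_ (hW.trans_le le_sup_right)
    rw [hsplit, Module.End.mul_eq_comp, map_comp]
    exact le_sup_of_le_left (map_mono ((map_mono inf_le_left).trans
      (map_pow_grF_le hshift hGN _ (by omega) (by omega))))

include hshift in
/-- Only the Lefschetz pieces with `j ≥ m + 2` survive in weight `-m-2`, and they lie in the
image of `N^{m+1}`. -/
theorem AdaptedFilt.grF_le_sup_map_pow (hG : AdaptedFilt N W G) {m : ℤ} (hm : 0 ≤ m) (p : ℤ) :
    grF G W (p - m - 1) (-m - 2) ≤ (grF G W p m).map (N ^ (m + 1).toNat) ⊔ W (-m - 3) := by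
  rw [hG.grF_eq]
  refine sup_le (le_sup_of_le_right (le_of_eq (congrArg W (by ring)))) (iSup_le fun j => ?_)
  exact (hG.filtLefschetzPiece_le_primImage hshift _ _ j).trans
    (primImage_le_sup_map_pow_grF hshift hG.1 hm p j)

end Filtration

section Dimension

variable {V : Type*} [AddCommGroup V] [Module ℂ V] [FiniteDimensional ℂ V] {N : Module.End ℂ V}
  {W G : ℤ → Submodule ℂ V}
  (hmono : Monotone W) (hshift : ∀ l : ℤ, ∀ x ∈ W l, N x ∈ W (l - 2))
  (hisoinj : ∀ l : ℕ, ∀ x ∈ W (l : ℤ), (N ^ l) x ∈ W (-(l : ℤ) - 1) → x ∈ W ((l : ℤ) - 1))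
  (hGN : ∀ p : ℤ, ∀ x ∈ G p, N x ∈ G (p - 1))

include hmono hshift in
theorem relFinrank_grF_eq_add {m : ℤ} (hm : 0 ≤ m) (p : ℤ) :
    relFinrank (grF G W p m) (W (m - 1)) =
      relFinrank ((grF G W p m).map (N ^ (m + 1).toNat)) (W (-m - 3)) +
        relFinrank (grF G W p m ⊓ primPre N W m) (W (m - 1)) := by
  have hker : grF G W p m ⊓ (W (-m - 3)).comap (N ^ (m + 1).toNat) =
      grF G W p m ⊓ primPre N W m := by
    rw [primPre, if_pos hm, ← inf_assoc, inf_eq_left.2 (grF_le hmono p m)]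
  rw [← hker]
  exact relFinrank_eq_add_relFinrank_inf_comap _ (le_grF p m)
    (map_pow_weight_le hshift _ (by omega))

include hmono hshift hGN in
theorem relFinrank_grF_le {m : ℤ} (hm : 0 ≤ m) (p : ℤ) :
    relFinrank (grF G W p m) (W (m - 1)) ≤
      relFinrank (grF G W p m ⊓ primPre N W m) (W (m - 1)) +
        relFinrank (grF G W (p - m - 1) (-m - 2)) (W (-m - 3)) := by
  rw [relFinrank_grF_eq_add hmono hshift hm, add_comm]
  exact Nat.add_le_add_left
    (relFinrank_mono _ (map_pow_grF_le hshift hGN _ (by omega) (by omega))) _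

include hmono hshift hisoinj in
theorem relFinrank_primImage {l : ℤ} {j : ℕ} (hlj : 0 ≤ l + j) (p : ℤ) :
    relFinrank (primImage N W G p l j) (W (l - 1)) =
      relFinrank (grF G W (p + j) (l + 2 * j) ⊓ primPre N W (l + 2 * j)) (W (l + 2 * j - 1)) := by
  have hker : (grF G W (p + j) (l + 2 * j) ⊓ primPre N W (l + 2 * j)) ⊓
      (W (l - 1)).comap (N ^ j) ≤ W (l + 2 * j - 1) := fun x hx =>
    mem_of_pow_apply_mem_of_nonneg hshift hisoinj hlj (grF_le hmono _ _ hx.1.1) hx.2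
  rw [primImage, relFinrank_sup_right, relFinrank_eq_add_relFinrank_inf_comap (N ^ j)
    (le_inf (le_grF _ _) (le_primPre hmono hshift (by omega)))
    (map_pow_weight_le hshift j (l := l + 2 * j - 1) (m := l - 1) (by ring)),
    relFinrank_eq_zero_of_le hker, add_zero]

end Dimension

theorem sup_iSup_eq_sup_biSup_range {α : Type*} [CompleteLattice α] {a : α} {f : ℕ → α} {n : ℕ}
    (h : ∀ j, n ≤ j → f j ≤ a) : a ⊔ ⨆ j, f j = a ⊔ ⨆ j ∈ Finset.range n, f j := by
  refine le_antisymm (sup_le le_sup_left (iSup_le fun j => ?_))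
    (sup_le_sup_left (iSup₂_le fun j _ => le_iSup f j) a)
  rcases lt_or_ge j n with hj | hj
  · exact le_sup_of_le_right (le_biSup f (Finset.mem_range.2 hj))
  · exact le_sup_of_le_left (h j hj)

section Comparison

variable {V : Type*} [AddCommGroup V] [Module ℂ V] [FiniteDimensional ℂ V] {N : Module.End ℂ V}
  {W F F₀ : ℤ → Submodule ℂ V}
  (hnil : IsNilpotent N) (hmono : Monotone W) (hshift : ∀ l : ℤ, ∀ x ∈ W l, N x ∈ W (l - 2))
  (hisoinj : ∀ l : ℕ, ∀ x ∈ W (l : ℤ), (N ^ l) x ∈ W (-(l : ℤ) - 1) → x ∈ W ((l : ℤ) - 1))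
  (hFN : ∀ p : ℤ, ∀ x ∈ F p, N x ∈ F (p - 1)) (hF₀ : AdaptedFilt N W F₀)
  (hE : ∀ p l : ℤ, relFinrank (grF F W p l) (W (l - 1)) = relFinrank (grF F₀ W p l) (W (l - 1)))

theorem relFinrank_grF_eq_of_finrank_quotient_eq (hFanti : Antitone F) (hF₀anti : Antitone F₀)
    (hFbd : ∃ p : ℤ, ∀ q, p ≤ q → F q = ⊥) (hF₀bd : ∃ p : ℤ, ∀ q, p ≤ q → F₀ q = ⊥)
    (hspp : ∀ p l : ℤ,
      finrank ℂ (↥(grF F W p l) ⧸ (grF F W (p + 1) l).comap (grF F W p l).subtype) =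
      finrank ℂ (↥(grF F₀ W p l) ⧸ (grF F₀ W (p + 1) l).comap (grF F₀ W p l).subtype))
    (p l : ℤ) :
    relFinrank (grF F W p l) (W (l - 1)) = relFinrank (grF F₀ W p l) (W (l - 1)) := by
  obtain ⟨p₁, hp₁⟩ := hFbd
  obtain ⟨p₂, hp₂⟩ := hF₀bd
  have htop : ∀ q, max p₁ p₂ ≤ q → finrank ℂ (grF F W q l) = finrank ℂ (grF F₀ W q l) :=
    fun q hq => by rw [grF_of_eq_bot (hp₁ q (by omega)), grF_of_eq_bot (hp₂ q (by omega))]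
  have hdown : ∀ q ≤ max p₁ p₂, finrank ℂ (grF F W q l) = finrank ℂ (grF F₀ W q l) := by
    intro q hq
    induction q, hq using Int.leInductionDown with
    | base => exact htop _ le_rfl
    | pred q _ ih =>
      have hq := hspp (q - 1) l
      rw [sub_add_cancel, finrank_quotient_comap_subtype, finrank_quotient_comap_subtype] at hq
      have h := relFinrank_add_finrank (grF_anti (W := W) hFanti (sub_le_self q zero_le_one) l)
      have h₀ := relFinrank_add_finrank (grF_anti (W := W) hF₀anti (sub_le_self q zero_le_one) l)
      omega
  have hfin := (le_total (max p₁ p₂) p).elim (htop p) (hdown p)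
  have h := relFinrank_add_finrank (le_grF (G := F) (W := W) p l)
  have h₀ := relFinrank_add_finrank (le_grF (G := F₀) (W := W) p l)
  omega

include hmono hshift hFN hF₀ hE in
theorem relFinrank_primPart_le {m : ℤ} (hm : 0 ≤ m) (p : ℤ) :
    relFinrank (grF F₀ W p m ⊓ primPre N W m) (W (m - 1)) ≤
      relFinrank (grF F W p m ⊓ primPre N W m) (W (m - 1)) := by
  have hF := relFinrank_grF_le hmono hshift hFN hm p
  have hF₀eq := relFinrank_grF_eq_add hmono hshift (G := F₀) hm p
  have hF₀img := relFinrank_mono (W (-m - 3)) (hF₀.grF_le_sup_map_pow hshift hm p)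
  rw [relFinrank_sup_right] at hF₀img
  have hEm := hE p m
  have hEm' := hE (p - m - 1) (-m - 2)
  rw [show -m - 2 - 1 = -m - 3 by ring] at hEm'
  omega

include hmono hshift hisoinj hFN hF₀ hE in
theorem relFinrank_primImage_le (p l : ℤ) (j : ℕ) :
    relFinrank (primImage N W F₀ p l j) (W (l - 1)) ≤
      relFinrank (primImage N W F p l j) (W (l - 1)) := by
  rcases lt_or_ge (l + j) 0 with h | h
  · rw [relFinrank_eq_zero_of_le
      ((primImage_le_lefschetzPiece p l j).trans_eq (lefschetzPiece_of_neg hshift h))]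
    exact Nat.zero_le _
  · rw [relFinrank_primImage hmono hshift hisoinj h, relFinrank_primImage hmono hshift hisoinj h]
    exact relFinrank_primPart_le hmono hshift hFN hF₀ hE (by omega) _

include hmono hshift hisoinj hFN hF₀ hE in
/-- The chain `dim F^p Gr_l = dim F₀^p Gr_l = Σ_j dim (filtLefschetzPiece F₀ j)
≤ Σ_j dim (primImage F₀ j) ≤ Σ_j dim (primImage F j) ≤ Σ_j dim (filtLefschetzPiece F j)
≤ dim F^p Gr_l` collapses to equalities. -/
theorem relFinrank_lefschetz_eq {n : ℕ} (hn : N ^ n = 0) (p l : ℤ) :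
    (∀ j ∈ Finset.range n, relFinrank (primImage N W F₀ p l j) (W (l - 1)) =
      relFinrank (primImage N W F p l j) (W (l - 1))) ∧
    (∀ j ∈ Finset.range n, relFinrank (primImage N W F p l j) (W (l - 1)) =
      relFinrank (filtLefschetzPiece N W F p l j) (W (l - 1))) ∧
    relFinrank (W (l - 1) ⊔ ⨆ j ∈ Finset.range n, filtLefschetzPiece N W F p l j) (W (l - 1)) =
      relFinrank (grF F W p l) (W (l - 1)) := by
  have hsum : ∀ G : ℤ → Submodule ℂ V,
      relFinrank (W (l - 1) ⊔ ⨆ j ∈ Finset.range n, filtLefschetzPiece N W G p l j) (W (l - 1)) =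
        ∑ j ∈ Finset.range n, relFinrank (filtLefschetzPiece N W G p l j) (W (l - 1)) :=
    fun G => relFinrank_sup_biSup_eq_sum
      ((iSupIndep_lefschetzPiece hshift hisoinj l).mono fun j => map_mono inf_le_right) _
  have hF₀sum : relFinrank (grF F W p l) (W (l - 1)) =
      ∑ j ∈ Finset.range n, relFinrank (filtLefschetzPiece N W F₀ p l j) (W (l - 1)) := by
    rw [hE, hF₀.grF_eq, sup_iSup_eq_sup_biSup_range (n := n) fun j hj =>
      inf_le_right.trans (lefschetzPiece_of_pow_eq_zero (pow_eq_zero_of_le hj hn)).le, hsum]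
  have h₀ : ∀ j ∈ Finset.range n, relFinrank (filtLefschetzPiece N W F₀ p l j) (W (l - 1)) ≤
      relFinrank (primImage N W F₀ p l j) (W (l - 1)) :=
    fun j _ => relFinrank_mono _ (hF₀.filtLefschetzPiece_le_primImage hshift p l j)
  have h₁ : ∀ j ∈ Finset.range n, relFinrank (primImage N W F₀ p l j) (W (l - 1)) ≤
      relFinrank (primImage N W F p l j) (W (l - 1)) :=
    fun j _ => relFinrank_primImage_le hmono hshift hisoinj hFN hF₀ hE p l j
  have h₂ : ∀ j ∈ Finset.range n, relFinrank (primImage N W F p l j) (W (l - 1)) ≤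
      relFinrank (filtLefschetzPiece N W F p l j) (W (l - 1)) :=
    fun j _ => relFinrank_mono _ (primImage_le_filtLefschetzPiece hshift hFN p l j)
  have h₃ := relFinrank_mono (W (l - 1))
    (sup_le (le_grF (G := F) p l) (iSup₂_le fun j _ => inf_le_left) :
      W (l - 1) ⊔ ⨆ j ∈ Finset.range n, filtLefschetzPiece N W F p l j ≤ grF F W p l)
  have hs₀ := Finset.sum_le_sum h₀
  have hs₁ := Finset.sum_le_sum h₁
  have hs₂ := Finset.sum_le_sum h₂
  have hsumF := hsum F
  exact ⟨(Finset.sum_eq_sum_iff_of_le h₁).1 (by omega),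
    (Finset.sum_eq_sum_iff_of_le h₂).1 (by omega), by omega⟩

include hnil hmono hshift hisoinj hFN hF₀ hE

theorem filtLefschetzPiece_eq_primImage (p l : ℤ) (j : ℕ) :
    filtLefschetzPiece N W F p l j = primImage N W F p l j := by
  obtain ⟨n, hn⟩ := hnil
  have h := (relFinrank_lefschetz_eq hmono hshift hisoinj hFN hF₀ hE
    (pow_eq_zero_of_le (Nat.le_add_right n (j + 1)) hn) p l).2.1 j (by simp; omega)
  exact (eq_of_le_of_relFinrank_eq (primImage_le_filtLefschetzPiece hshift hFN p l j)
    (le_primImage p l j) h).symm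

theorem grF_eq_sup_iSup_filtLefschetzPiece (p l : ℤ) :
    grF F W p l = W (l - 1) ⊔ ⨆ j : ℕ, filtLefschetzPiece N W F p l j := by
  obtain ⟨n, hn⟩ := hnil
  rw [sup_iSup_eq_sup_biSup_range (n := n) fun j hj =>
    inf_le_right.trans (lefschetzPiece_of_pow_eq_zero (pow_eq_zero_of_le hj hn)).le]
  exact (eq_of_le_of_relFinrank_eq (sup_le (le_grF p l) (iSup₂_le fun j _ => inf_le_left))
    le_sup_left (relFinrank_lefschetz_eq hmono hshift hisoinj hFN hF₀ hE hn p l).2.2).symm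

theorem relFinrank_primPart_eq (p : ℤ) {l : ℤ} (hl : 0 ≤ l) :
    relFinrank (grF F W p l ⊓ primPre N W l) (W (l - 1)) =
      relFinrank (grF F₀ W p l ⊓ primPre N W l) (W (l - 1)) := by
  obtain ⟨n, hn⟩ := hnil
  have h := (relFinrank_lefschetz_eq hmono hshift hisoinj hFN hF₀ hE
    (pow_eq_zero_of_le n.le_succ hn) p l).1 0 (by simp)
  rw [relFinrank_primImage hmono hshift hisoinj (by simpa using hl),
    relFinrank_primImage hmono hshift hisoinj (by simpa using hl)] at h
  simpa using h.symm

end Comparison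

theorem stmt_7_general {V : Type*} [AddCommGroup V] [Module ℂ V] [FiniteDimensional ℂ V]
    (N : Module.End ℂ V) (hnil : IsNilpotent N)
    (W : ℤ → Submodule ℂ V)
    (hmono : Monotone W)
    (hshift : ∀ l : ℤ, ∀ x ∈ W l, N x ∈ W (l - 2))
    (hisoinj : ∀ l : ℕ, ∀ x ∈ W (l : ℤ),
      (N ^ l) x ∈ W (-(l : ℤ) - 1) → x ∈ W ((l : ℤ) - 1))
    (F F₀ : ℤ → Submodule ℂ V)
    (hFanti : Antitone F) (hF₀anti : Antitone F₀)
    (hFbd : ∃ p : ℤ, ∀ q, p ≤ q → F q = ⊥)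
    (hF₀bd : ∃ p : ℤ, ∀ q, p ≤ q → F₀ q = ⊥)
    (hF₀ad : AdaptedFilt N W F₀)
    (hFN : ∀ p : ℤ, ∀ x ∈ F p, N x ∈ F (p - 1))
    (hspp : ∀ p l : ℤ,
      Module.finrank ℂ (↥(grF F W p l) ⧸ (grF F W (p + 1) l).comap (grF F W p l).subtype) =
      Module.finrank ℂ
        (↥(grF F₀ W p l) ⧸ (grF F₀ W (p + 1) l).comap (grF F₀ W p l).subtype)) :
    AdaptedFilt N W F ∧
    ∀ p : ℤ, ∀ l : ℕ,
      Module.finrank ℂ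
        (↥(grF F W p (l : ℤ) ⊓ primPre N W (l : ℤ)) ⧸
          (W ((l : ℤ) - 1)).comap (grF F W p (l : ℤ) ⊓ primPre N W (l : ℤ)).subtype) =
      Module.finrank ℂ
        (↥(grF F₀ W p (l : ℤ) ⊓ primPre N W (l : ℤ)) ⧸
          (W ((l : ℤ) - 1)).comap (grF F₀ W p (l : ℤ) ⊓ primPre N W (l : ℤ)).subtype) := by
  have hE := relFinrank_grF_eq_of_finrank_quotient_eq hFanti hF₀anti hFbd hF₀bd hspp
  refine ⟨adaptedFilt_of_lefschetz hshift hisoinj hFN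
    (fun p l j _ => filtLefschetzPiece_eq_primImage hnil hmono hshift hisoinj hFN hF₀ad hE p l j)
    (grF_eq_sup_iSup_filtLefschetzPiece hnil hmono hshift hisoinj hFN hF₀ad hE), fun p l => ?_⟩
  rw [finrank_quotient_comap_subtype, finrank_quotient_comap_subtype]
  exact relFinrank_primPart_eq hnil hmono hshift hisoinj hFN hF₀ad hE p (Nat.cast_nonneg l)

/-- Suppose `F₀` is adapted to `N` and `W`, `F` satisfies
`N(F^p) ⊆ F^{p-1}`, and the spectral pairs of `F` and `F₀` agree, i.e.
`dim (F^p Gr^W_l / F^{p+1} Gr^W_l) = dim (F₀^p Gr^W_l / F₀^{p+1} Gr^W_l)` for all `p, l`.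
Then `F` is adapted to `N` and `W`, and `dim ((F^p Gr^W_l) ∩ P_l) =
dim ((F₀^p Gr^W_l) ∩ P_l)` for all `p` and all `l ≥ 0`. -/
theorem stmt_7 {V : Type*} [AddCommGroup V] [Module ℂ V] [FiniteDimensional ℂ V]
    (N : Module.End ℂ V) (hnil : IsNilpotent N)
    (W : ℤ → Submodule ℂ V)
    (hmono : Monotone W)
    (hbot : ∃ a : ℤ, ∀ l ≤ a, W l = ⊥)
    (htop : ∃ b : ℤ, ∀ l, b ≤ l → W l = ⊤)
    (hshift : ∀ l : ℤ, ∀ x ∈ W l, N x ∈ W (l - 2))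
    (hisoinj : ∀ l : ℕ, ∀ x ∈ W (l : ℤ),
      (N ^ l) x ∈ W (-(l : ℤ) - 1) → x ∈ W ((l : ℤ) - 1))
    (hisosurj : ∀ l : ℕ, ∀ y ∈ W (-(l : ℤ)),
      ∃ x ∈ W (l : ℤ), (N ^ l) x - y ∈ W (-(l : ℤ) - 1))
    (F F₀ : ℤ → Submodule ℂ V)
    (hFanti : Antitone F) (hF₀anti : Antitone F₀)
    (hFexh : ∃ p : ℤ, ∀ q ≤ p, F q = ⊤) (hFbd : ∃ p : ℤ, ∀ q, p ≤ q → F q = ⊥)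
    (hF₀exh : ∃ p : ℤ, ∀ q ≤ p, F₀ q = ⊤) (hF₀bd : ∃ p : ℤ, ∀ q, p ≤ q → F₀ q = ⊥)
    (hF₀ad : AdaptedFilt N W F₀)
    (hFN : ∀ p : ℤ, ∀ x ∈ F p, N x ∈ F (p - 1))
    (hspp : ∀ p l : ℤ,
      Module.finrank ℂ (↥(grF F W p l) ⧸ (grF F W (p + 1) l).comap (grF F W p l).subtype) =
      Module.finrank ℂ
        (↥(grF F₀ W p l) ⧸ (grF F₀ W (p + 1) l).comap (grF F₀ W p l).subtype)) :
    AdaptedFilt N W F ∧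
    ∀ p : ℤ, ∀ l : ℕ,
      Module.finrank ℂ
        (↥(grF F W p (l : ℤ) ⊓ primPre N W (l : ℤ)) ⧸
          (W ((l : ℤ) - 1)).comap (grF F W p (l : ℤ) ⊓ primPre N W (l : ℤ)).subtype) =
      Module.finrank ℂ
        (↥(grF F₀ W p (l : ℤ) ⊓ primPre N W (l : ℤ)) ⧸
          (W ((l : ℤ) - 1)).comap (grF F₀ W p (l : ℤ) ⊓ primPre N W (l : ℤ)).subtype) :=
  stmt_7_general N hnil W hmono hshift hisoinj F F₀ hFanti hF₀anti hFbd hF₀bd hF₀ad hFN hspp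
end

section
/- Assume l = 1. For all a, b ∈ C with a ≤ b ≤ a+1, the image of the induced ℂ-linear map f̄_{a,b} : L_a ⊗ ℂ → L_b ⊗ ℂ equals the kernel of the induced ℂ-linear map f̄_{b,a+1} : L_b ⊗ ℂ → L_{a+1} ⊗ ℂ. -/
open Pointwise

/-- The ring `R = ℂ[[r₁,…,rₙ]]` of formal power series in `n` variables over `ℂ`. -/
abbrev PSRing (n : ℕ) := MvPowerSeries (Fin n) ℂ

/-- The maximal ideal `𝔪` of `R = ℂ[[r₁,…,rₙ]]`, i.e. the power series with vanishing
constant coefficient. -/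
noncomputable def mIdeal (n : ℕ) : Ideal (PSRing n) :=
  RingHom.ker (MvPowerSeries.constantCoeff (σ := Fin n) (R := ℂ))

/-! Put `M = L_{a+1}`, `N = L_b` and `r = r₁`, so that `r • M = L_a ⊆ N ⊆ M`. In bases, the
inclusion `N → M` and multiplication by `r` from `M` to `N` are matrices `A`, `B` with
`A * B = r • 1`; modulo `𝔪` this gives `Ā * B̄ = 0`, i.e. `im B̄ ⊆ ker Ā`. A matrix whose reduction has a `d`-dimensional
kernel has its determinant in `𝔪 ^ d`, so `det A * det B = r ^ μ ∉ 𝔪 ^ (μ + 1)` forces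
`dim ker Ā + dim ker B̄ ≤ μ`, and rank–nullity for `B̄` turns the inclusion into an equality. -/

open IsLocalRing Module Matrix

theorem Matrix.det_mem_pow_card_of_cols_mem {R ι : Type*} [CommRing R] [Fintype ι]
    [DecidableEq ι] (I : Ideal R) (A : Matrix ι ι R) (T : Finset ι)
    (hT : ∀ j ∈ T, ∀ i, A i j ∈ I) : A.det ∈ I ^ T.card := by
  rw [Matrix.det_apply']
  refine Submodule.sum_mem _ fun σ _ => Ideal.mul_mem_left _ _ ?_
  rw [← Finset.prod_mul_prod_compl T]
  refine Ideal.mul_mem_right _ _ ?_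
  simpa [Finset.prod_const] using
    Ideal.prod_mem_prod (I := fun _ => I) fun j hj => hT j hj (σ j)

theorem Module.Basis.exists_basis_card_eq_finrank_mem {K V ι : Type*} [Field K]
    [AddCommGroup V] [Module K V] [Finite ι] (b₀ : Basis ι K V) (W : Submodule K V) :
    ∃ (b : Basis ι K V) (T : Finset ι), T.card = finrank K W ∧ ∀ j ∈ T, b j ∈ W := by
  have := Module.Finite.of_basis b₀
  obtain ⟨W', hW⟩ := Submodule.exists_isCompl W
  let b' := ((finBasis K W').prod (finBasis K W)).map (Submodule.prodEquivOfIsCompl W' W hW.symm)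
  let e := b'.indexEquiv b₀
  refine ⟨b'.reindex e, Finset.univ.map (Function.Embedding.inr.trans e.toEmbedding), by simp, ?_⟩
  simp [b']

theorem IsLocalRing.det_mem_maximalIdeal_pow {R ι : Type*} [CommRing R] [IsLocalRing R]
    [Fintype ι] [DecidableEq ι] (A : Matrix ι ι R) :
    A.det ∈ maximalIdeal R ^
      finrank (ResidueField R) (LinearMap.ker (A.map (residue R)).mulVecLin) := by
  obtain ⟨b, T, hT, hbT⟩ := (Pi.basisFun (ResidueField R) ι).exists_basis_card_eq_finrank_mem
    (LinearMap.ker (A.map (residue R)).mulVecLin)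
  -- `P` lifts the change of basis to `b`, so the columns `j ∈ T` of `A * P` vanish modulo `𝔪`.
  let Q := (Pi.basisFun (ResidueField R) ι).toMatrix b
  obtain ⟨P, hP⟩ : ∃ P : Matrix ι ι R, P.map (residue R) = Q :=
    ⟨Q.map (Function.surjInv residue_surjective), by
      ext; simp [Function.surjInv_eq residue_surjective]⟩
  have hP_unit : IsUnit P.det := by
    rw [← residue_ne_zero_iff_isUnit, RingHom.map_det, RingHom.mapMatrix_apply, hP,
      ← Basis.det_apply]
    exact (Basis.isUnit_det _ b).ne_zero
  rw [← Ideal.mul_unit_mem_iff_mem _ hP_unit, ← Matrix.det_mul, ← hT]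
  refine Matrix.det_mem_pow_card_of_cols_mem _ _ _ fun j hj i => ?_
  have hcol := LinearMap.mem_ker.mp (hbT j hj)
  have hPj : ∀ k, residue R (P k j) = b j k := fun k => by
    simpa [Q, Basis.toMatrix_apply] using congrFun (congrFun hP k) j
  rw [← residue_eq_zero_iff]
  calc residue R ((A * P) i j) = (A.map (residue R) *ᵥ b j) i := by
        simp [Matrix.mul_apply, Matrix.mulVec, dotProduct, hPj]
    _ = 0 := by simpa using congrFun hcol i

theorem IsLocalRing.ker_map_residue_eq_range_of_mul_eq_smul_one {R ι : Type*} [CommRing R]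
    [IsLocalRing R] [Fintype ι] [DecidableEq ι] {r : R} (hr : r ∈ maximalIdeal R)
    (hr_pow : r ^ Fintype.card ι ∉ maximalIdeal R ^ (Fintype.card ι + 1))
    {A B : Matrix ι ι R} (hAB : A * B = r • 1) :
    LinearMap.ker (A.map (residue R)).mulVecLin =
      LinearMap.range (B.map (residue R)).mulVecLin := by
  have hAB_bar : A.map (residue R) * B.map (residue R) = 0 := by
    rw [← Matrix.map_mul, hAB]
    ext i j
    simp [(residue_eq_zero_iff r).mpr hr]
  have hle : LinearMap.range (B.map (residue R)).mulVecLin ≤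
      LinearMap.ker (A.map (residue R)).mulVecLin := by
    rintro _ ⟨u, rfl⟩
    simp [Matrix.mulVec_mulVec, hAB_bar]
  have hdet : A.det * B.det = r ^ Fintype.card ι := by
    rw [← Matrix.det_mul, hAB, Matrix.det_smul, Matrix.det_one, mul_one]
  have hdim : finrank (ResidueField R) (LinearMap.ker (A.map (residue R)).mulVecLin) +
      finrank (ResidueField R) (LinearMap.ker (B.map (residue R)).mulVecLin) ≤ Fintype.card ι := by
    by_contra! h
    refine hr_pow (Ideal.pow_le_pow_right h ?_)
    rw [← hdet, pow_add]
    exact Ideal.mul_mem_mul (det_mem_maximalIdeal_pow A) (det_mem_maximalIdeal_pow B)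
  have hrank := LinearMap.finrank_range_add_finrank_ker (B.map (residue R)).mulVecLin
  rw [Module.finrank_fintype_fun_eq_card] at hrank
  exact (Submodule.eq_of_le_of_finrank_le hle (by omega)).symm

theorem Module.Basis.mem_ideal_smul_top_iff {R M ι : Type*} [CommRing R] [AddCommGroup M]
    [Module R M] [Fintype ι] (b : Basis ι R M) (I : Ideal R) (x : M) :
    x ∈ I • (⊤ : Submodule R M) ↔ ∀ i, b.repr x i ∈ I := by
  refine ⟨fun hx => ?_, fun hx => ?_⟩
  · refine Submodule.smul_induction_on hx (fun a ha y _ i => ?_) (fun y z hy hz i => ?_)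
    · simpa using Ideal.mul_mem_right _ _ ha
    · simpa using Ideal.add_mem _ (hy i) (hz i)
  · rw [← b.sum_repr x]
    exact Submodule.sum_mem _ fun i _ => Submodule.smul_mem_smul (hx i) Submodule.mem_top

theorem IsLocalRing.mem_maximalIdeal_smul_top_iff {R M ι : Type*} [CommRing R] [IsLocalRing R]
    [AddCommGroup M] [Module R M] [Fintype ι] (b : Basis ι R M) (x : M) :
    x ∈ maximalIdeal R • (⊤ : Submodule R M) ↔ residue R ∘ b.repr x = 0 := by
  simp [b.mem_ideal_smul_top_iff, funext_iff, residue_eq_zero_iff]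

theorem IsLocalRing.apply_mem_maximalIdeal_smul_top_iff {R M N ι : Type*} [CommRing R]
    [IsLocalRing R] [AddCommGroup M] [Module R M] [AddCommGroup N] [Module R N] [Fintype ι]
    [DecidableEq ι] (bM : Basis ι R M) (bN : Basis ι R N) {r : R} (hr : r ∈ maximalIdeal R)
    (hr_pow : r ^ Fintype.card ι ∉ maximalIdeal R ^ (Fintype.card ι + 1))
    {f : N →ₗ[R] M} {g : M →ₗ[R] N} (hfg : f ∘ₗ g = r • LinearMap.id) (x : N) :
    f x ∈ maximalIdeal R • (⊤ : Submodule R M) ↔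
      ∃ y, x - g y ∈ maximalIdeal R • (⊤ : Submodule R N) := by
  set A := LinearMap.toMatrix bN bM f
  set B := LinearMap.toMatrix bM bN g
  have hAB : A * B = r • 1 := by
    rw [← LinearMap.toMatrix_comp, hfg, map_smul, LinearMap.toMatrix_id]
  have hf : residue R ∘ bM.repr (f x) = A.map (residue R) *ᵥ (residue R ∘ bN.repr x) := by
    ext i
    rw [← LinearMap.toMatrix_mulVec_repr bN bM, Function.comp_apply, RingHom.map_mulVec]
  have hg : ∀ y, residue R ∘ bN.repr (g y) = B.map (residue R) *ᵥ (residue R ∘ bM.repr y) := by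
    intro y
    ext i
    rw [← LinearMap.toMatrix_mulVec_repr bM bN, Function.comp_apply, RingHom.map_mulVec]
  have hsub : ∀ y, residue R ∘ bN.repr (x - g y) =
      residue R ∘ bN.repr x - B.map (residue R) *ᵥ (residue R ∘ bM.repr y) := by
    intro y
    rw [← hg]
    ext i
    simp
  simp_rw [mem_maximalIdeal_smul_top_iff bM, mem_maximalIdeal_smul_top_iff bN, hf, hsub,
    sub_eq_zero, ← Matrix.mulVecLin_apply, ← LinearMap.mem_ker,
    ker_map_residue_eq_range_of_mul_eq_smul_one hr hr_pow hAB, LinearMap.mem_range]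
  constructor
  · rintro ⟨u, hu⟩
    obtain ⟨v, rfl⟩ := residue_surjective.comp_left u
    exact ⟨bM.repr.symm (Finsupp.equivFunOnFinite.symm v), by simpa using hu.symm⟩
  · rintro ⟨y, hy⟩
    exact ⟨_, hy.symm⟩

theorem IsLocalRing.mem_maximalIdeal_smul_iff_exists_sub {R V ι : Type*} [CommRing R]
    [IsLocalRing R] [AddCommGroup V] [Module R V] [Fintype ι] [DecidableEq ι]
    {N M : Submodule R V} (bN : Basis ι R N) (bM : Basis ι R M) {r : R}
    (hr : r ∈ maximalIdeal R)
    (hr_pow : r ^ Fintype.card ι ∉ maximalIdeal R ^ (Fintype.card ι + 1))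
    (hNM : N ≤ M) (hrM : r • M ≤ N) {x : V} (hx : x ∈ N) :
    x ∈ maximalIdeal R • M ↔ ∃ y ∈ r • M, x - y ∈ maximalIdeal R • N := by
  let g : M →ₗ[R] N := (r • M.subtype).codRestrict N fun z =>
    hrM (Submodule.smul_mem_pointwise_smul _ _ _ z.2)
  have key := apply_mem_maximalIdeal_smul_top_iff bM bN hr hr_pow
    (f := Submodule.inclusion hNM) (g := g) (by ext; simp [g]) ⟨x, hx⟩
  simp only [Submodule.mem_smul_top_iff] at key
  simp only [Submodule.mem_smul_pointwise_iff_exists]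
  refine key.trans ⟨fun ⟨z, hz⟩ => ⟨_, ⟨z, z.2, rfl⟩, hz⟩, ?_⟩
  rintro ⟨_, ⟨z, hz, rfl⟩, hxz⟩
  exact ⟨⟨z, hz⟩, hxz⟩

theorem MvPowerSeries.ker_constantCoeff_eq_maximalIdeal {σ K : Type*} [Field K] :
    RingHom.ker (constantCoeff (σ := σ) (R := K)) = maximalIdeal (MvPowerSeries σ K) :=
  eq_maximalIdeal (RingHom.ker_isMaximal_of_surjective _ fun c => ⟨C c, constantCoeff_C c⟩)

theorem MvPowerSeries.le_order_of_mem_ker_constantCoeff_pow {σ R : Type*} [CommRing R] {m : ℕ}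
    {f : MvPowerSeries σ R} (hf : f ∈ RingHom.ker (constantCoeff (σ := σ) (R := R)) ^ m) :
    (m : ℕ∞) ≤ f.order := by
  induction m generalizing f with
  | zero => simp
  | succ m ih =>
    rw [pow_succ'] at hf
    refine Submodule.mul_induction_on hf (fun a ha b hb => ?_) fun g h hg hh => ?_
    · calc ((m + 1 : ℕ) : ℕ∞) = 1 + m := by push_cast; ring
        _ ≤ a.order + b.order :=
          add_le_add (one_le_order_iff_constCoeff_eq_zero.mpr ha) (ih hb)
        _ ≤ (a * b).order := le_order_mul
    · exact (le_min hg hh).trans min_order_le_add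

theorem MvPowerSeries.X_pow_notMem_ker_constantCoeff_pow {σ R : Type*} [CommRing R]
    [Nontrivial R] (i : σ) (k : ℕ) :
    (X i : MvPowerSeries σ R) ^ k ∉ RingHom.ker (constantCoeff (σ := σ) (R := R)) ^ (k + 1) := by
  intro h
  have := le_order_of_mem_ker_constantCoeff_pow h
  rw [X_pow_eq, order_monomial_of_ne_zero one_ne_zero] at this
  norm_cast at this
  simp at this

/-- `M ⊗ ℂ = M/𝔪M` is expressed on representatives: for `x ∈ L_b`, the class of `x` lies in the
kernel of `f̄_{b,a+1}` iff `x ∈ 𝔪·L_{a+1}`, and in the image of `f̄_{a,b}` iff `x ≡ y mod 𝔪·L_b`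
for some `y ∈ L_a`. -/
theorem stmt_8_general (n μ : ℕ) (hn : 1 ≤ n)
    (V : Type*) [AddCommGroup V] [Module (PSRing n) V]
    (C : Set ℝ)
    (hCper : ∀ x : ℝ, x ∈ C ↔ x + 1 ∈ C)
    (L : ℝ → Submodule (PSRing n) V)
    (hfree : ∀ c ∈ C, Nonempty (Module.Basis (Fin μ) (PSRing n) (L c)))
    (hmono : ∀ b ∈ C, ∀ c ∈ C, b ≤ c → L b ≤ L c)
    (hsmul : ∀ c ∈ C, L (c - 1) = (MvPowerSeries.X (⟨0, hn⟩ : Fin n) : PSRing n) • L c)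
    (a b : ℝ) (ha : a ∈ C) (hb : b ∈ C) (hab : a ≤ b) (hba : b ≤ a + 1) :
    ∀ x ∈ L b,
      (x ∈ mIdeal n • L (a + 1) ↔ ∃ y ∈ L a, x - y ∈ mIdeal n • L b) := by
  intro x hx
  have ha1 : a + 1 ∈ C := (hCper a).1 ha
  have hLa : L a = (MvPowerSeries.X ⟨0, hn⟩ : PSRing n) • L (a + 1) := by
    simpa using hsmul _ ha1
  obtain ⟨bM⟩ := hfree _ ha1
  obtain ⟨bN⟩ := hfree b hb
  have hX : (MvPowerSeries.X ⟨0, hn⟩ : PSRing n) ∈ maximalIdeal (PSRing n) := by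
    rw [← MvPowerSeries.ker_constantCoeff_eq_maximalIdeal]
    exact MvPowerSeries.constantCoeff_X _
  have hX_pow : (MvPowerSeries.X ⟨0, hn⟩ : PSRing n) ^ Fintype.card (Fin μ) ∉
      maximalIdeal (PSRing n) ^ (Fintype.card (Fin μ) + 1) := by
    rw [Fintype.card_fin, ← MvPowerSeries.ker_constantCoeff_eq_maximalIdeal]
    exact MvPowerSeries.X_pow_notMem_ker_constantCoeff_pow _ μ
  rw [mIdeal, MvPowerSeries.ker_constantCoeff_eq_maximalIdeal, hLa]
  exact mem_maximalIdeal_smul_iff_exists_sub bN bM hX hX_pow (hmono b hb _ ha1 hba)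
    (hLa ▸ hmono a ha b hb hab) hx

/-- case `l = 1`.  For a family `(L_c)_{c∈C}` of parabolic lattices and
`a ≤ b ≤ a+1` in `C`, the image of `f̄_{a,b} : L_a ⊗ ℂ → L_b ⊗ ℂ` equals the kernel of
`f̄_{b,a+1} : L_b ⊗ ℂ → L_{a+1} ⊗ ℂ`.  Here `M ⊗ ℂ = M/𝔪M`, and the statement is expressed
on representatives: for `x ∈ L_b`, the class of `x` lies in the kernel of `f̄_{b,a+1}`
(i.e. `x ∈ 𝔪·L_{a+1}`) iff it lies in the image of `f̄_{a,b}` (i.e. `x ≡ y mod 𝔪·L_b` for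
some `y ∈ L_a`). -/
theorem stmt_8 (n μ : ℕ) (hn : 1 ≤ n) (hμ : 1 ≤ μ)
    (V : Type*) [AddCommGroup V] [Module (PSRing n) V]
    [Module (Localization.Away (MvPowerSeries.X (⟨0, hn⟩ : Fin n) : PSRing n)) V]
    [IsScalarTower (PSRing n)
      (Localization.Away (MvPowerSeries.X (⟨0, hn⟩ : Fin n) : PSRing n)) V]
    (C : Set ℝ) (hCne : C.Nonempty)
    (hCper : ∀ x : ℝ, x ∈ C ↔ x + 1 ∈ C)
    (hCfin : ∀ x : ℝ, (C ∩ Set.Ioc (x - 1) x).Finite)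
    (L : ℝ → Submodule (PSRing n) V)
    (hfree : ∀ c ∈ C, Nonempty (Module.Basis (Fin μ) (PSRing n) (L c)))
    (hgen : ∀ c ∈ C, Submodule.span
      (Localization.Away (MvPowerSeries.X (⟨0, hn⟩ : Fin n) : PSRing n))
      (L c : Set V) = ⊤)
    (hmono : ∀ b ∈ C, ∀ c ∈ C, b ≤ c → L b ≤ L c)
    (hsmul : ∀ c ∈ C, L (c - 1) = (MvPowerSeries.X (⟨0, hn⟩ : Fin n) : PSRing n) • L c)
    (a b : ℝ) (ha : a ∈ C) (hb : b ∈ C) (hab : a ≤ b) (hba : b ≤ a + 1) :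
    ∀ x ∈ L b,
      (x ∈ mIdeal n • L (a + 1) ↔ ∃ y ∈ L a, x - y ∈ mIdeal n • L b) :=
  stmt_8_general n μ hn V C hCper L hfree hmono hsmul a b ha hb hab hba
end

section
/- The following hold: (i) k_i + k_{μ+1-i} = 0 for all 1 ≤ i ≤ μ; (ii) P(v_i, v_j) = 0 whenever k_i + k_j > 0; (iii) the intersection Γ := L₀ ∩ L_∞ equals ⊕_{i : k_i ≥ 0} ⊕_{m=0}^{k_i} ℂ·z^m v_i as a ℂ-vector space, for all a, b ∈ Γ the Laurent polynomial z^{-w}·P(a,b) is a constant in ℂ, the resulting ℂ-bilinear form B(a,b) := z^{-w}·P(a,b) on Γ is symmetric, and the radical of B equals ⊕_{i : k_i > 0} ⊕_{m=0}^{k_i} ℂ·z^m v_i. -/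
open LaurentPolynomial

variable {μ : ℕ} {W : Type*} [AddCommGroup W] [Module (LaurentPolynomial ℂ) W]
  [Module ℂ W] [IsScalarTower ℂ (LaurentPolynomial ℂ) W]

/-- The lattice `L₀ = ⊕ᵢ ℂ[z]·vᵢ`, as a `ℂ`-subspace of `W`: the `ℂ`-span of the vectors
`z^m·vᵢ`, `m ≥ 0`. -/
noncomputable def latticeZero (v : Module.Basis (Fin μ) (LaurentPolynomial ℂ) W) : Submodule ℂ W :=
  Submodule.span ℂ {x : W | ∃ (i : Fin μ) (m : ℕ), x = (T (m : ℤ) : LaurentPolynomial ℂ) • v i}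

/-- The lattice `L_∞ = ⊕ᵢ ℂ[z⁻¹]·z^{kᵢ}vᵢ`, as a `ℂ`-subspace of `W`: the `ℂ`-span of the
vectors `z^{kᵢ-m}·vᵢ`, `m ≥ 0`. -/
noncomputable def latticeInfty (v : Module.Basis (Fin μ) (LaurentPolynomial ℂ) W)
    (k : Fin μ → ℤ) : Submodule ℂ W :=
  Submodule.span ℂ
    {x : W | ∃ (i : Fin μ) (m : ℕ), x = (T (k i - m) : LaurentPolynomial ℂ) • v i}

/-!
Twisting by `T^(-w)` turns `P` into a `j`-hermitian form `Φ`. Its Gram matrix `G` on `v` is the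
polynomial matrix `A`, while `diag(T^k) G diag(±T^k)` is `B`, polynomial in `T⁻¹`; hence `G i i'`
has degrees in `[0, -(kᵢ + kᵢ')]`. This gives (ii), and makes `Φ` constant on monomials
`T^m vᵢ, T^n vᵢ'` with `0 ≤ m ≤ kᵢ`, `0 ≤ n ≤ kᵢ'`. Comparing `det B = ±det A · T^(2∑k)` in
`K[T]` and `K[T⁻¹]` gives `∑ k = 0`, and `kᵢ + k_{μ+1-i} > 0` would leave a zero block that makes
`A` singular; together this is (i). On `Γ` the form only sees the constant terms `G(0)`, an
invertible matrix vanishing where `kᵢ + kⱼ > 0`; since `#{k < 0} = #{k > 0}` by (i), a dimension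
count shows that a vector of the radical has no component at level `kᵢ = 0`.
-/

namespace LaurentPolynomial

open AddMonoidAlgebra (supported mem_supported mem_supported')
open Set

section Semiring

variable {R : Type*} [CommSemiring R]

lemma coeff_T_mul_s12 (t n : ℤ) (f : R[T;T⁻¹]) : (T t * f).coeff n = f.coeff (n - t) := by
  rw [T, AddMonoidAlgebra.coeff_single_mul_apply, one_mul, neg_add_eq_sub]

lemma coeff_C_mul (c : R) (n : ℤ) (f : R[T;T⁻¹]) : (C c * f).coeff n = c * f.coeff n := by
  rw [← single_eq_C, AddMonoidAlgebra.coeff_single_mul_apply, neg_zero, zero_add]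

lemma toLaurent_mem_supported_Ici (p : Polynomial R) :
    p.toLaurent ∈ supported R R (Ici 0) := by
  rw [mem_supported, support_coeff_toLaurent]
  intro _ hn
  obtain ⟨n, -, rfl⟩ := Finset.mem_map.mp hn
  exact Int.natCast_nonneg n

lemma C_mul_T_mul_mem_supported {f : R[T;T⁻¹]} {s s' : Set ℤ} (hf : f ∈ supported R R s)
    (c : R) (t : ℤ) (h : ∀ n ∈ s, n + t ∈ s') : C c * T t * f ∈ supported R R s' := by
  rw [mem_supported'] at hf ⊢
  intro n hn
  rw [mul_assoc, coeff_C_mul, coeff_T_mul_s12, hf _ fun h' => hn (by simpa using h _ h'), mul_zero]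

lemma mem_supported_Icc_of_T_mul_mem {f : R[T;T⁻¹]} {t : ℤ} (h₀ : f ∈ supported R R (Ici 0))
    (h : T t * f ∈ supported R R (Iic 0)) : f ∈ supported R R (Icc 0 (-t)) := by
  rw [mem_supported'] at *
  intro n hn
  rcases not_and_or.mp hn with hn | hn
  · exact h₀ n hn
  · have := h (n + t) (by simp only [mem_Iic]; omega)
    rwa [coeff_T_mul_s12, add_sub_cancel_right] at this

lemma eq_zero_of_mem_supported_Icc {f : R[T;T⁻¹]} {a b : ℤ} (hf : f ∈ supported R R (Icc a b))
    (h : b < a) : f = 0 := by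
  ext n
  exact mem_supported'.mp hf n fun hn => by simp only [mem_Icc] at hn; omega

lemma eq_C_of_mem_supported_zero {f : R[T;T⁻¹]} (hf : f ∈ supported R R {0}) :
    f = C (f.coeff 0) := by
  ext n
  rw [C_apply]
  split_ifs with h
  · rw [h]
  · exact mem_supported'.mp hf n h

lemma coeff_zero_mul_of_mem_supported_Ici {f g : R[T;T⁻¹]} (hf : f ∈ supported R R (Ici 0))
    (hg : g ∈ supported R R (Ici 0)) : (f * g).coeff 0 = f.coeff 0 * g.coeff 0 :=
  AddMonoidAlgebra.coeff_mul_add_of_uniqueAdd (f := f) (g := g) (a0 := 0) (b0 := 0)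
    fun a b ha hb hab => by
      have := mem_supported.mp hf ha
      have := mem_supported.mp hg hb
      simp only [mem_Ici, add_zero] at *
      omega

lemma coeff_toLaurent_natCast (p : Polynomial R) (n : ℕ) : p.toLaurent.coeff n = p.coeff n := by
  rw [coeff_toLaurent]
  exact Finsupp.mapDomain_apply Nat.castEmbedding.injective _ n

lemma prod_T {α : Type*} (s : Finset α) (g : α → ℤ) :
    ∏ i ∈ s, (T (g i) : R[T;T⁻¹]) = T (∑ i ∈ s, g i) := by
  classical
  induction s using Finset.induction_on with
  | empty => simp [T_zero]
  | insert a s h ih => rw [Finset.prod_insert h, Finset.sum_insert h, ih, T_add]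

variable (R) in
/-- The Laurent polynomials in `T⁻¹`. -/
noncomputable def nonposSubalgebra : Subalgebra R R[T;T⁻¹] :=
  (supported R R (Iic 0)).toSubalgebra
    (mem_supported.mpr fun n hn =>
      (Finset.mem_singleton.mp (support_C_mul_T (1 : R) 0 (by simpa [T_zero] using hn))).le)
    fun f g hf hg => mem_supported.mpr fun n hn => by
      classical
      obtain ⟨a, ha, b, hb, rfl⟩ :=
        Finset.mem_add.1 (AddMonoidAlgebra.support_coeff_mul_subset f g hn)
      exact mem_Iic.mpr (add_nonpos (mem_supported.mp hf ha) (mem_supported.mp hg hb))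

lemma mem_nonposSubalgebra_iff {f : R[T;T⁻¹]} :
    f ∈ nonposSubalgebra R ↔ ∀ n ∈ f.coeff.support, n ≤ 0 :=
  .rfl

lemma C_mul_T_mem_nonposSubalgebra_iff {a : R} (ha : a ≠ 0) {n : ℤ} :
    C a * T n ∈ nonposSubalgebra R ↔ n ≤ 0 := by
  simp [mem_nonposSubalgebra_iff, support_coeff_C_mul_T_of_ne_zero ha]

end Semiring

variable {K : Type*} [Field K]

lemma eq_zero_of_C_mul_T_mul_eq_one {a : K} (ha : a ≠ 0) {n : ℤ} {g : K[T;T⁻¹]}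
    (hf : C a * T n ∈ nonposSubalgebra K) (hg : g ∈ nonposSubalgebra K)
    (h : C a * T n * g = 1) : n = 0 := by
  have hinv : C a * T n * (C a⁻¹ * T (-n)) = 1 := by
    rw [mul_mul_mul_comm, ← map_mul, mul_inv_cancel₀ ha, ← T_add, add_neg_cancel, map_one,
      T_zero, one_mul]
  obtain rfl : g = C a⁻¹ * T (-n) := left_inv_eq_right_inv (by rwa [mul_comm]) hinv
  rw [C_mul_T_mem_nonposSubalgebra_iff (inv_ne_zero ha)] at hg
  rw [C_mul_T_mem_nonposSubalgebra_iff ha] at hf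
  omega

lemma algHom_T_of_T_one_eq_neg {j : K[T;T⁻¹] →ₐ[K] K[T;T⁻¹]} (hj : j (T 1) = -T 1) (n : ℤ) :
    j (T n) = C ((-1) ^ n) * T n := by
  have hT : (T 1 : K[T;T⁻¹]) * T (-1) = 1 := by rw [← T_add, add_neg_cancel, T_zero]
  have hneg : j (T (-1)) = -T (-1) := by
    have h : j (T 1) * j (T (-1)) = 1 := by rw [← map_mul, hT, map_one]
    rw [hj] at h
    linear_combination (-T (-1)) * h - j (T (-1)) * hT
  induction n using Int.induction_on with
  | zero => simp [T_zero]
  | succ m ih =>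
    rw [T_add, map_mul, ih, hj, zpow_add_one₀ (by norm_num), map_mul, map_neg, map_one]
    ring
  | pred m ih =>
    rw [sub_eq_add_neg, T_add, map_mul, ih, hneg, zpow_add₀ (by norm_num), zpow_neg_one,
      inv_neg, inv_one, map_mul, map_neg, map_one]
    ring

lemma algHom_C (j : K[T;T⁻¹] →ₐ[K] K[T;T⁻¹]) (c : K) : j (C c) = C c := by
  rw [C_eq_algebraMap, AlgHom.commutes]

end LaurentPolynomial

namespace Matrix

lemma det_mem_of_forall_mem {R S n : Type*} [CommRing R] [SetLike S R] [SubringClass S R]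
    [Fintype n] [DecidableEq n] (s : S) (M : Matrix n n R) (h : ∀ i j, M i j ∈ s) :
    M.det ∈ s := by
  rw [det_apply]
  refine sum_mem fun σ _ => ?_
  rw [Units.smul_def]
  exact zsmul_mem (prod_mem fun i _ => h _ _) _

lemma det_eq_zero_of_zero_block {R : Type*} [CommRing R] {n : ℕ} (A : Matrix (Fin n) (Fin n) R)
    (i₀ : Fin n) (hA : ∀ i i', i₀ ≤ i → i₀.rev ≤ i' → A i i' = 0) : A.det = 0 := by
  rw [det_apply]
  refine Finset.sum_eq_zero fun σ _ => ?_
  -- the zero block has `n - i₀` rows and `i₀ + 1` columns, so every permutation meets it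
  obtain ⟨i', hi', hσi'⟩ : ∃ i', i₀.rev ≤ i' ∧ i₀ ≤ σ i' := by
    by_contra! h
    have hsub : (Finset.Ici i₀.rev).image σ ⊆ Finset.Iio i₀ := by
      simpa [Finset.image_subset_iff] using h
    have := Finset.card_le_card hsub
    rw [Finset.card_image_of_injective _ σ.injective, Fin.card_Ici, Fin.card_Iio,
      Fin.val_rev] at this
    omega
  exact smul_eq_zero_of_right _ (Finset.prod_eq_zero (Finset.mem_univ i') (hA _ _ hσi' hi'))

variable {K ι : Type*} [Field K] [Fintype ι] [DecidableEq ι] {M : Matrix ι ι K}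
  {k : ι → ℤ}

lemma eq_zero_of_vecMul_eq_zero_of_support_level_zero (hM : IsUnit M.det)
    (hMk : ∀ i j, 0 < k i + k j → M i j = 0)
    (hcard : Fintype.card {i // k i < 0} = Fintype.card {i // 0 < k i})
    {x : ι → K} (hx : ∀ i, k i ≠ 0 → x i = 0) (hxM : ∀ j, 0 ≤ k j → vecMul x M j = 0) :
    x = 0 := by
  -- `x` and the unit vectors at positive levels give `#{k > 0} + 1` vectors whose images
  -- under `M` live in the `#{k < 0}`-dimensional space of columns with negative level.
  let G : Option {i // 0 < k i} → ι → K := fun p => p.elim x fun i => Pi.single i.1 1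
  have hGM : ∀ p j, 0 ≤ k j → vecMul (G p) M j = 0 := by
    rintro (_ | ⟨i, hi⟩) j hj
    · exact hxM j hj
    · simp [G, single_vecMul, hMk i j (by omega)]
  obtain ⟨c, hc, p₀, hp₀⟩ := Fintype.not_linearIndependent_iff.mp fun hli =>
    (by simpa [hcard] using hli.fintype_card_le_finrank :
      ¬ LinearIndependent K fun p (j : {j // k j < 0}) => vecMul (G p) M j) hli
  have hcG : ∑ p, c p • G p = 0 := by
    refine eq_zero_of_vecMul_eq_zero hM.ne_zero (funext fun j => ?_)
    have hlin : vecMul (∑ p, c p • G p) M j = ∑ p, c p * vecMul (G p) M j := by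
      simp only [sum_vecMul, Finset.sum_apply, smul_vecMul, Pi.smul_apply, smul_eq_mul]
    rw [hlin]
    rcases lt_or_ge (k j) 0 with hj | hj
    · simpa using congrFun hc ⟨j, hj⟩
    · simp [hGM _ j hj]
  have hcsome : ∀ i, c (some i) = 0 := fun i => by
    simpa [Fintype.sum_option, G, hx i.1 i.2.ne', Pi.single_apply, ← Subtype.ext_iff]
      using congrFun hcG i.1
  have hcnone : c none ≠ 0 := by
    rcases p₀ with _ | i
    · exact hp₀
    · exact absurd (hcsome i) hp₀
  simpa [Fintype.sum_option, G, hcsome, hcnone] using hcG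

lemma eq_zero_of_vecMul_eq_zero_of_level_zero (hM : IsUnit M.det)
    (hMk : ∀ i j, 0 < k i + k j → M i j = 0)
    (hcard : Fintype.card {i // k i < 0} = Fintype.card {i // 0 < k i})
    {x : ι → K} (hx : ∀ i, k i < 0 → x i = 0) (hxM : ∀ j, 0 ≤ k j → vecMul x M j = 0)
    {i : ι} (hi : k i = 0) : x i = 0 := by
  let x' : ι → K := fun i => if k i = 0 then x i else 0
  have hx'M : ∀ j, 0 ≤ k j → vecMul x' M j = 0 := by
    intro j hj
    rw [← hxM j hj]
    refine Finset.sum_congr rfl fun i _ => ?_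
    rcases lt_trichotomy (k i) 0 with h | h | h
    · simp [x', h.ne, hx i h]
    · simp [x', h]
    · simp [hMk i j (by omega)]
  simpa [x', hi] using congrFun
    (eq_zero_of_vecMul_eq_zero_of_support_level_zero hM hMk hcard (fun i hi => if_neg hi) hx'M) i

end Matrix

section Determinant

open Matrix

variable {K ι : Type*} [Field K] [Fintype ι] [DecidableEq ι]

lemma isUnit_det_coeff_zero_toLaurent {A : Matrix ι ι (Polynomial K)} (hA : IsUnit A) :
    IsUnit (Matrix.of fun i i' => (A i i').toLaurent.coeff 0).det := by
  have hA0 :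
      (Matrix.of fun i i' => (A i i').toLaurent.coeff 0) = A.map Polynomial.constantCoeff := by
    ext i i'
    simpa using coeff_toLaurent_natCast (A i i') 0
  rw [hA0, ← RingHom.mapMatrix_apply, ← RingHom.map_det]
  exact ((isUnit_iff_isUnit_det A).mp hA).map _

lemma sum_eq_zero_of_isUnit {k : ι → ℤ} {A : Matrix ι ι (Polynomial K)} (hA : IsUnit A)
    {B Binv : Matrix ι ι K[T;T⁻¹]}
    (hB : ∀ i i', B i i' = C ((-1) ^ k i') * T (k i + k i') * (A i i').toLaurent)
    (hBneg : ∀ i i', B i i' ∈ nonposSubalgebra K)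
    (hBinvneg : ∀ i i', Binv i i' ∈ nonposSubalgebra K)
    (hBBinv : B * Binv = 1) : ∑ i, k i = 0 := by
  obtain ⟨c, hc, hcA⟩ := Polynomial.isUnit_iff.mp ((isUnit_iff_isUnit_det A).mp hA)
  have hBdiag : B = diagonal (fun i => T (k i)) * A.map Polynomial.toLaurent *
      diagonal (fun i => C ((-1) ^ k i) * T (k i)) := by
    ext i i' : 1
    rw [mul_diagonal, diagonal_mul, hB, T_add, map_apply]
    ring
  have hdet : B.det = C ((∏ i, (-1) ^ k i) * c) * T (2 * ∑ i, k i) := by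
    rw [hBdiag, det_mul, det_mul, det_diagonal, det_diagonal, ← RingHom.mapMatrix_apply,
      ← RingHom.map_det, ← hcA, Polynomial.toLaurent_C, Finset.prod_mul_distrib, prod_T,
      ← map_prod, map_mul, two_mul, T_add]
    ring
  have hε : ∏ i, (-1 : K) ^ k i ≠ 0 :=
    Finset.prod_ne_zero_iff.mpr fun i _ => zpow_ne_zero _ (neg_ne_zero.mpr one_ne_zero)
  have := eq_zero_of_C_mul_T_mul_eq_one (mul_ne_zero hε hc.ne_zero)
    (hdet ▸ det_mem_of_forall_mem _ B hBneg) (det_mem_of_forall_mem _ Binv hBinvneg)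
    (by rw [← hdet, ← det_mul, hBBinv, det_one])
  omega

lemma add_rev_eq_zero_of_isUnit_det {R : Type*} [CommRing R] [Nontrivial R] {n : ℕ}
    {k : Fin n → ℤ} (hk : Monotone k) (hsum : ∑ i, k i = 0) {A : Matrix (Fin n) (Fin n) R}
    (hA : IsUnit A.det) (hAk : ∀ i i', 0 < k i + k i' → A i i' = 0) (i : Fin n) :
    k i + k i.rev = 0 := by
  have hle : ∀ i, k i + k i.rev ≤ 0 := fun i => by
    by_contra! h
    refine not_isUnit_zero (det_eq_zero_of_zero_block A i (fun i₁ i₂ h₁ h₂ => hAk _ _ ?_) ▸ hA)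
    linarith [hk h₁, hk h₂]
  have hrev : ∑ i : Fin n, k i.rev = ∑ i, k i := Equiv.sum_comp Fin.revPerm k
  have hsum' : ∑ i : Fin n, (k i + k i.rev) = 0 := by
    rw [Finset.sum_add_distrib, hrev, hsum, add_zero]
  exact (Finset.sum_eq_zero_iff_of_nonpos fun i _ => hle i).mp hsum' i (Finset.mem_univ i)

end Determinant

section MonomialSpan

open AddMonoidAlgebra (supported mem_supported')

variable {K ι M : Type*} [Field K] [AddCommGroup M] [Module K[T;T⁻¹] M] [Module K M]
  (v : Module.Basis ι K[T;T⁻¹] M)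

noncomputable def monomialSpan (S : ι → Set ℤ) : Submodule K M :=
  Submodule.span K {x | ∃ i, ∃ n ∈ S i, x = (T n : K[T;T⁻¹]) • v i}

lemma linearIndependent_T_smul [IsScalarTower K K[T;T⁻¹] M] :
    LinearIndependent K fun p : ℤ × ι => (T p.1 : K[T;T⁻¹]) • v p.2 := by
  convert ((AddMonoidAlgebra.basis ℤ K).smulTower v).linearIndependent using 1
  funext p
  rw [Module.Basis.smulTower_apply, AddMonoidAlgebra.basis_apply]
  rfl

lemma linearIndependent_T_natCast_smul [IsScalarTower K K[T;T⁻¹] M] (r : ι × ℕ → Prop) :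
    LinearIndependent K fun p : {q : ι × ℕ // r q} => (T (p.1.2 : ℤ) : K[T;T⁻¹]) • v p.1.1 := by
  have hinj : Function.Injective fun p : {q : ι × ℕ // r q} => ((p.1.2 : ℤ), p.1.1) :=
    fun p q h => by
      simp only [Prod.mk.injEq, Nat.cast_inj] at h
      exact Subtype.ext (Prod.ext h.2 h.1)
  have := (linearIndependent_T_smul v).comp _ hinj
  exact this

lemma mem_monomialSpan_iff [IsScalarTower K K[T;T⁻¹] M] {S : ι → Set ℤ} {a : M} :
    a ∈ monomialSpan v S ↔ ∀ i, v.repr a i ∈ supported K K (S i) := by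
  let b := (AddMonoidAlgebra.basis ℤ K).smulTower v
  have hS : {x | ∃ i, ∃ n ∈ S i, x = (T n : K[T;T⁻¹]) • v i} = b '' {p | p.1 ∈ S p.2} := by
    ext x
    simp only [Set.mem_ofPred_eq, Set.mem_image, b, Module.Basis.smulTower_apply, Prod.exists,
      AddMonoidAlgebra.basis_apply, eq_comm (a := x)]
    exact ⟨fun ⟨i, n, hn, e⟩ => ⟨n, i, hn, e⟩, fun ⟨n, i, hn, e⟩ => ⟨i, n, hn, e⟩⟩
  rw [monomialSpan, hS, b.mem_span_image]
  simp only [Set.subset_def, Finset.mem_coe, Finsupp.mem_support_iff, Set.mem_ofPred_eq,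
    Prod.forall, b, Module.Basis.smulTower_repr, mem_supported']
  exact ⟨fun h i n hn => not_not.mp fun h' => hn (h n i h'),
    fun h n i h' => not_not.mp fun hn => h' (h i n hn)⟩

lemma monomialSpan_inf [IsScalarTower K K[T;T⁻¹] M] (S S' : ι → Set ℤ) :
    monomialSpan v S ⊓ monomialSpan v S' = monomialSpan v fun i => S i ∩ S' i := by
  ext a
  simp only [Submodule.mem_inf, mem_monomialSpan_iff, mem_supported', Set.mem_inter_iff,
    not_and_or]
  exact ⟨fun h i n hn => hn.elim (h.1 i n) (h.2 i n),
    fun h => ⟨fun i n hn => h i n (.inl hn), fun i n hn => h i n (.inr hn)⟩⟩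

lemma monomialSpan_mono {S S' : ι → Set ℤ} (h : ∀ i, S i ⊆ S' i) :
    monomialSpan v S ≤ monomialSpan v S' :=
  Submodule.span_mono fun _ ⟨i, n, hn, e⟩ => ⟨i, n, h i hn, e⟩

lemma basis_mem_monomialSpan {S : ι → Set ℤ} {i : ι} (hi : 0 ∈ S i) : v i ∈ monomialSpan v S :=
  Submodule.subset_span ⟨i, 0, hi, by rw [T_zero, one_smul]⟩

end MonomialSpan

lemma LinearMap.apply_mem_of_mem_span {R M N P : Type*} [CommSemiring R] [AddCommMonoid M]
    [AddCommMonoid N] [AddCommMonoid P] [Module R M] [Module R N] [Module R P]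
    (Φ : M →ₗ[R] N →ₗ[R] P) {s : Set M} {t : Set N} {U : Submodule R P}
    (h : ∀ x ∈ s, ∀ y ∈ t, Φ x y ∈ U) {a : M} {b : N} (ha : a ∈ Submodule.span R s)
    (hb : b ∈ Submodule.span R t) : Φ a b ∈ U := by
  refine Submodule.map₂_le.mp ?_ a ha b hb
  rw [Submodule.map₂_span_span, Submodule.span_le]
  rintro _ ⟨x, hx, y, hy, rfl⟩
  exact h x hx y hy

section HermitianForm

open AddMonoidAlgebra (supported mem_supported')
open Set

variable {K ι M : Type*} [Field K] [AddCommGroup M] [Module K[T;T⁻¹] M] [Module K M]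
  {j : K[T;T⁻¹] →ₐ[K] K[T;T⁻¹]}

structure IsHermitianForm (j : K[T;T⁻¹] →ₐ[K] K[T;T⁻¹]) (Φ : M →ₗ[K] M →ₗ[K] K[T;T⁻¹]) :
    Prop where
  smul_left : ∀ (f : K[T;T⁻¹]) a b, Φ (f • a) b = f * Φ a b
  symm : ∀ a b, Φ a b = j (Φ b a)

lemma exists_hermitian_twist [IsScalarTower K K[T;T⁻¹] M] {P : M → M → K[T;T⁻¹]} (w : ℤ)
    (hj : j (T 1) = -T 1)
    (hPadd₁ : ∀ a a' b, P (a + a') b = P a b + P a' b)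
    (hPadd₂ : ∀ a b b', P a (b + b') = P a b + P a b')
    (hPsmul₁ : ∀ (f : K[T;T⁻¹]) a b, P (f • a) b = f * P a b)
    (hPsmul₂ : ∀ (f : K[T;T⁻¹]) a b, P a (f • b) = j f * P a b)
    (hPsym : ∀ a b, P a b = C ((-1 : K) ^ w) * j (P b a)) :
    ∃ Φ : M →ₗ[K] M →ₗ[K] K[T;T⁻¹], (∀ a b, Φ a b = T (-w) * P a b) ∧ IsHermitianForm j Φ := by
  refine ⟨LinearMap.mk₂ K (fun a b => T (-w) * P a b) (fun a a' b => by rw [hPadd₁, mul_add])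
    (fun c a b => ?_) (fun a b b' => by rw [hPadd₂, mul_add]) (fun c a b => ?_),
    fun a b => rfl, ⟨fun f a b => ?_, fun a b => ?_⟩⟩
  · rw [← algebraMap_smul K[T;T⁻¹] c a, hPsmul₁, smul_eq_C_mul, C_eq_algebraMap]
    ring
  · rw [← algebraMap_smul K[T;T⁻¹] c b, hPsmul₂, AlgHom.commutes, smul_eq_C_mul, C_eq_algebraMap]
    ring
  · simp only [LinearMap.mk₂_apply, hPsmul₁]
    ring
  · simp only [LinearMap.mk₂_apply]
    rw [hPsym, map_mul, algHom_T_of_T_one_eq_neg hj, ← inv_zpow', inv_neg, inv_one]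
    ring

variable {Φ : M →ₗ[K] M →ₗ[K] K[T;T⁻¹]}

lemma IsHermitianForm.smul_right (hΦ : IsHermitianForm j Φ) (f : K[T;T⁻¹]) (a b : M) :
    Φ a (f • b) = j f * Φ a b := by
  rw [hΦ.symm, hΦ.smul_left, map_mul, ← hΦ.symm]

lemma apply_T_smul_T_smul (hj : j (T 1) = -T 1) (hΦ : IsHermitianForm j Φ)
    (m n : ℤ) (x y : M) :
    Φ ((T m : K[T;T⁻¹]) • x) ((T n : K[T;T⁻¹]) • y) = C ((-1) ^ n) * T (m + n) * Φ x y := by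
  rw [hΦ.smul_left, hΦ.smul_right, algHom_T_of_T_one_eq_neg hj, T_add]
  ring

lemma apply_mem_supported_Icc (hj : j (T 1) = -T 1) (hΦ : IsHermitianForm j Φ)
    {x y : M} {m n : ℤ} (h₀ : Φ x y ∈ supported K K (Ici 0))
    (h : Φ ((T m : K[T;T⁻¹]) • x) ((T n : K[T;T⁻¹]) • y) ∈ nonposSubalgebra K) :
    Φ x y ∈ supported K K (Icc 0 (-(m + n))) := by
  refine mem_supported_Icc_of_T_mul_mem h₀ ?_
  have hT : T (m + n) * Φ x y = C ((-1) ^ n) * Φ ((T m : K[T;T⁻¹]) • x) ((T n : K[T;T⁻¹]) • y) := by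
    rw [apply_T_smul_T_smul hj hΦ, ← mul_assoc, ← mul_assoc, ← map_mul, ← mul_zpow,
      neg_one_mul, neg_neg, one_zpow, map_one, one_mul]
  rw [hT, C_eq_algebraMap]
  exact (nonposSubalgebra K).mul_mem (Subalgebra.algebraMap_mem _ _) h

lemma apply_mem_supported_of_mem_monomialSpan [IsScalarTower K K[T;T⁻¹] M]
    (hj : j (T 1) = -T 1) (hΦ : IsHermitianForm j Φ)
    {v : Module.Basis ι K[T;T⁻¹] M} {k : ι → ℤ}
    (hG : ∀ i i', Φ (v i) (v i') ∈ supported K K (Icc 0 (-(k i + k i'))))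
    {S S' : ι → Set ℤ} {U : Set ℤ}
    (hU : ∀ i i', ∀ m ∈ S i, ∀ n ∈ S' i', ∀ p ∈ Icc 0 (-(k i + k i')), p + (m + n) ∈ U)
    {a b : M} (ha : a ∈ monomialSpan v S) (hb : b ∈ monomialSpan v S') :
    Φ a b ∈ supported K K U := by
  refine Φ.apply_mem_of_mem_span (fun x hx y hy => ?_) ha hb
  obtain ⟨i, m, hm, rfl⟩ := hx
  obtain ⟨i', n, hn, rfl⟩ := hy
  rw [apply_T_smul_T_smul hj hΦ]
  exact C_mul_T_mul_mem_supported (hG i i') _ _ fun p hp => hU i i' m hm n hn p hp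

lemma eq_C_of_mem_monomialSpan_Icc [IsScalarTower K K[T;T⁻¹] M]
    (hj : j (T 1) = -T 1) (hΦ : IsHermitianForm j Φ)
    {v : Module.Basis ι K[T;T⁻¹] M} {k : ι → ℤ}
    (hG : ∀ i i', Φ (v i) (v i') ∈ supported K K (Icc 0 (-(k i + k i'))))
    {a b : M} (ha : a ∈ monomialSpan v fun i => Icc 0 (k i))
    (hb : b ∈ monomialSpan v fun i => Icc 0 (k i)) : Φ a b = C ((Φ a b).coeff 0) :=
  eq_C_of_mem_supported_zero <| apply_mem_supported_of_mem_monomialSpan hj hΦ hG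
    (fun i i' m hm n hn p hp => by simp only [mem_Icc, mem_singleton_iff] at *; omega) ha hb

lemma apply_comm_of_mem_monomialSpan_Icc [IsScalarTower K K[T;T⁻¹] M]
    (hj : j (T 1) = -T 1) (hΦ : IsHermitianForm j Φ)
    {v : Module.Basis ι K[T;T⁻¹] M} {k : ι → ℤ}
    (hG : ∀ i i', Φ (v i) (v i') ∈ supported K K (Icc 0 (-(k i + k i'))))
    {a b : M} (ha : a ∈ monomialSpan v fun i => Icc 0 (k i))
    (hb : b ∈ monomialSpan v fun i => Icc 0 (k i)) : Φ a b = Φ b a := by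
  rw [hΦ.symm, eq_C_of_mem_monomialSpan_Icc hj hΦ hG hb ha, algHom_C,
    ← eq_C_of_mem_monomialSpan_Icc hj hΦ hG hb ha]

end HermitianForm

section Radical

open AddMonoidAlgebra (supported mem_supported')
open Set

variable {K ι M : Type*} [Field K] [Fintype ι] [DecidableEq ι] [AddCommGroup M]
  [Module K[T;T⁻¹] M] [Module K M] [IsScalarTower K K[T;T⁻¹] M] {j : K[T;T⁻¹] →ₐ[K] K[T;T⁻¹]}
  {Φ : M →ₗ[K] M →ₗ[K] K[T;T⁻¹]} {v : Module.Basis ι K[T;T⁻¹] M} {k : ι → ℤ}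

lemma coeff_zero_repr_eq_zero_of_mem_radical
    (hΦ : IsHermitianForm j Φ)
    (hG : ∀ i i', Φ (v i) (v i') ∈ supported K K (Icc 0 (-(k i + k i'))))
    (hGdet : IsUnit (Matrix.of fun i i' => (Φ (v i) (v i')).coeff 0).det)
    (hcard : Fintype.card {i // k i < 0} = Fintype.card {i // 0 < k i})
    {a : M} (ha : a ∈ monomialSpan v fun i => Icc 0 (k i))
    (hrad : ∀ b ∈ monomialSpan v (fun i => Icc 0 (k i)), Φ a b = 0) {i : ι} (hi : k i = 0) :
    (v.repr a i).coeff 0 = 0 := by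
  rw [mem_monomialSpan_iff] at ha
  refine Matrix.eq_zero_of_vecMul_eq_zero_of_level_zero hGdet
    (fun i i' h => by simp [eq_zero_of_mem_supported_Icc (hG i i') (by omega : -(k i + k i') < 0)])
    hcard (fun i hi => mem_supported'.mp (ha i) 0 fun h => by simp only [mem_Icc] at h; omega)
    (fun i' hi' => ?_) hi
  have hexp : Φ a (v i') = ∑ i, v.repr a i * Φ (v i) (v i') := by
    conv_lhs => rw [← v.sum_repr a]
    simp only [map_sum, LinearMap.sum_apply, hΦ.smul_left]
  have hcol := congrArg (fun f => f.coeff 0)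
    (hrad (v i') (basis_mem_monomialSpan v ⟨le_rfl, hi'⟩))
  simp only [hexp, AddMonoidAlgebra.coeff_sum, Finset.sum_apply', AddMonoidAlgebra.coeff_zero,
    Finsupp.coe_zero, Pi.zero_apply] at hcol
  rw [← hcol]
  simp only [Matrix.vecMul, dotProduct, Matrix.of_apply]
  refine Finset.sum_congr rfl fun i _ => (coeff_zero_mul_of_mem_supported_Ici ?_ ?_).symm
  · exact AddMonoidAlgebra.supported_mono Icc_subset_Ici_self (ha i)
  · exact AddMonoidAlgebra.supported_mono Icc_subset_Ici_self (hG i i')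

lemma radical_eq_monomialSpan (hj : j (T 1) = -T 1) (hΦ : IsHermitianForm j Φ)
    (hG : ∀ i i', Φ (v i) (v i') ∈ supported K K (Icc 0 (-(k i + k i'))))
    (hGdet : IsUnit (Matrix.of fun i i' => (Φ (v i) (v i')).coeff 0).det)
    (hcard : Fintype.card {i // k i < 0} = Fintype.card {i // 0 < k i}) :
    {a | a ∈ monomialSpan v (fun i => Icc 0 (k i)) ∧
        ∀ b ∈ monomialSpan v (fun i => Icc 0 (k i)), Φ a b = 0} =
      (monomialSpan v (fun i => {n | 0 < k i ∧ n ∈ Icc 0 (k i)}) : Set M) := by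
  ext a
  refine ⟨fun ⟨ha, hrad⟩ => ?_,
    fun ha => ⟨monomialSpan_mono v (fun i _ h => h.2) ha, fun b hb => ?_⟩⟩
  · refine (mem_monomialSpan_iff v).mpr fun i => mem_supported'.mpr fun n hn => ?_
    by_cases hin : n ∈ Icc 0 (k i)
    · obtain ⟨rfl, hi⟩ : n = 0 ∧ k i = 0 := by
        simp only [mem_Icc, mem_ofPred_eq, not_and] at hn hin; omega
      exact coeff_zero_repr_eq_zero_of_mem_radical hΦ hG hGdet hcard ha hrad hi
    · exact mem_supported'.mp ((mem_monomialSpan_iff v).mp ha i) n hin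
  · have := apply_mem_supported_of_mem_monomialSpan hj hΦ hG (U := ∅)
      (fun i i' m hm n hn p hp => by simp only [mem_Icc, mem_ofPred_eq] at hm hn hp; omega) ha hb
    ext n
    exact mem_supported'.mp this n (notMem_empty n)

end Radical

section Lattices

open Set

variable {d : ℕ} {M : Type*} [AddCommGroup M] [Module ℂ[T;T⁻¹] M] [Module ℂ M]

lemma latticeZero_eq_monomialSpan (v : Module.Basis (Fin d) ℂ[T;T⁻¹] M) :
    latticeZero v = monomialSpan v fun _ => Ici 0 := by
  refine congrArg _ (Set.ext fun x => ⟨?_, ?_⟩)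
  · rintro ⟨i, m, rfl⟩
    exact ⟨i, m, Int.natCast_nonneg m, rfl⟩
  · rintro ⟨i, n, hn, rfl⟩
    exact ⟨i, n.toNat, by rw [Int.toNat_of_nonneg hn]⟩

lemma latticeInfty_eq_monomialSpan (v : Module.Basis (Fin d) ℂ[T;T⁻¹] M) (k : Fin d → ℤ) :
    latticeInfty v k = monomialSpan v fun i => Iic (k i) := by
  refine congrArg _ (Set.ext fun x => ⟨?_, ?_⟩)
  · rintro ⟨i, m, rfl⟩
    exact ⟨i, k i - m, by simp, rfl⟩
  · rintro ⟨i, n, hn, rfl⟩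
    exact ⟨i, (k i - n).toNat, by rw [Int.toNat_of_nonneg (sub_nonneg.mpr hn), sub_sub_cancel]⟩

lemma latticeZero_inf_latticeInfty [IsScalarTower ℂ ℂ[T;T⁻¹] M]
    (v : Module.Basis (Fin d) ℂ[T;T⁻¹] M) (k : Fin d → ℤ) :
    latticeZero v ⊓ latticeInfty v k = monomialSpan v fun i => Icc 0 (k i) := by
  simp_rw [latticeZero_eq_monomialSpan, latticeInfty_eq_monomialSpan, monomialSpan_inf,
    Ici_inter_Iic]

lemma span_natCast_smul_eq_monomialSpan (v : Module.Basis (Fin d) ℂ[T;T⁻¹] M) (k : Fin d → ℤ)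
    (p : Fin d → Prop) :
    Submodule.span ℂ {x : M | ∃ (i : Fin d) (m : ℕ), p i ∧ (m : ℤ) ≤ k i ∧
        x = (T (m : ℤ) : ℂ[T;T⁻¹]) • v i} =
      monomialSpan v fun i => {n | p i ∧ n ∈ Icc 0 (k i)} := by
  refine congrArg _ (Set.ext fun x => ⟨?_, ?_⟩)
  · rintro ⟨i, m, hp, hm, rfl⟩
    exact ⟨i, m, ⟨hp, Int.natCast_nonneg m, hm⟩, rfl⟩
  · rintro ⟨i, n, ⟨hp, hn₀, hn⟩, rfl⟩
    exact ⟨i, n.toNat, hp, by omega, by rw [Int.toNat_of_nonneg hn₀]⟩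

end Lattices

theorem stmt_12_general (w : ℤ)
    (v : Module.Basis (Fin μ) (LaurentPolynomial ℂ) W)
    (k : Fin μ → ℤ) (hk : Monotone k)
    (j : LaurentPolynomial ℂ →ₐ[ℂ] LaurentPolynomial ℂ) (hj : j (T 1) = -T 1)
    (P : W → W → LaurentPolynomial ℂ)
    (hPadd₁ : ∀ a a' b : W, P (a + a') b = P a b + P a' b)
    (hPadd₂ : ∀ a b b' : W, P a (b + b') = P a b + P a b')
    (hPsmul₁ : ∀ (f : LaurentPolynomial ℂ) (a b : W), P (f • a) b = f * P a b)
    (hPsmul₂ : ∀ (f : LaurentPolynomial ℂ) (a b : W), P a (f • b) = j f * P a b)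
    (hPsym : ∀ a b : W, P a b = LaurentPolynomial.C ((-1 : ℂ) ^ w) * j (P b a))
    (hmat₀ : ∃ A : Matrix (Fin μ) (Fin μ) (Polynomial ℂ), IsUnit A ∧
      ∀ i i', (A i i').toLaurent = T (-w) * P (v i) (v i'))
    (hmatInf : ∃ B Binv : Matrix (Fin μ) (Fin μ) (LaurentPolynomial ℂ),
      (∀ i i', B i i' =
        T (-w) * P ((T (k i) : LaurentPolynomial ℂ) • v i)
          ((T (k i') : LaurentPolynomial ℂ) • v i')) ∧
      (∀ i i', ∀ m ∈ (B i i').coeff.support, m ≤ 0) ∧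
      (∀ i i', ∀ m ∈ (Binv i i').coeff.support, m ≤ 0) ∧
      B * Binv = 1 ∧ Binv * B = 1) :
    -- (i) antisymmetry of the exponents
    (∀ i : Fin μ, k i + k i.rev = 0) ∧
    -- (ii) vanishing of P on pairs with kᵢ + kⱼ > 0
    (∀ i i' : Fin μ, 0 < k i + k i' → P (v i) (v i') = 0) ∧
    -- (iii) description of Γ = L₀ ∩ L_∞ …
    (latticeZero v ⊓ latticeInfty v k = Submodule.span ℂ
      {x : W | ∃ (i : Fin μ) (m : ℕ), 0 ≤ k i ∧ (m : ℤ) ≤ k i ∧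
        x = (T (m : ℤ) : LaurentPolynomial ℂ) • v i}) ∧
    LinearIndependent ℂ
      (fun p : {q : Fin μ × ℕ // 0 ≤ k q.1 ∧ (q.2 : ℤ) ≤ k q.1} =>
        ((T (p.1.2 : ℤ) : LaurentPolynomial ℂ) • v p.1.1 : W)) ∧
    -- … z^{-w}·P(a,b) is a constant on Γ …
    (∀ a ∈ latticeZero v ⊓ latticeInfty v k, ∀ b ∈ latticeZero v ⊓ latticeInfty v k,
      ∃ c : ℂ, T (-w) * P a b = LaurentPolynomial.C c) ∧
    -- … the resulting bilinear form B(a,b) = z^{-w}·P(a,b) is symmetric …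
    (∀ a ∈ latticeZero v ⊓ latticeInfty v k, ∀ b ∈ latticeZero v ⊓ latticeInfty v k,
      T (-w) * P a b = T (-w) * P b a) ∧
    -- … and its radical is ⊕_{i : kᵢ > 0} ⊕_{m=0}^{kᵢ} ℂ·z^m vᵢ.
    ({a : W | a ∈ latticeZero v ⊓ latticeInfty v k ∧
        ∀ b ∈ latticeZero v ⊓ latticeInfty v k, T (-w) * P a b = 0} =
      ↑(Submodule.span ℂ
        {x : W | ∃ (i : Fin μ) (m : ℕ), 0 < k i ∧ (m : ℤ) ≤ k i ∧
          x = (T (m : ℤ) : LaurentPolynomial ℂ) • v i})) := by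
  obtain ⟨Φ, hΦP, hΦ⟩ := exists_hermitian_twist w hj hPadd₁ hPadd₂ hPsmul₁ hPsmul₂ hPsym
  obtain ⟨A, hA, hAΦ⟩ := hmat₀
  obtain ⟨B, Binv, hBΦ, hBneg, hBinvneg, hBBinv, -⟩ := hmatInf
  simp only [← hΦP] at hAΦ hBΦ ⊢
  simp only [← mem_nonposSubalgebra_iff] at hBneg hBinvneg
  have hG : ∀ i i', Φ (v i) (v i') ∈ AddMonoidAlgebra.supported ℂ ℂ (Set.Icc 0 (-(k i + k i'))) :=
    fun i i' => apply_mem_supported_Icc hj hΦ (hAΦ i i' ▸ toLaurent_mem_supported_Ici _)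
      (hBΦ i i' ▸ hBneg i i')
  have hG0 : ∀ i i', 0 < k i + k i' → Φ (v i) (v i') = 0 := fun i i' h =>
    eq_zero_of_mem_supported_Icc (hG i i') (by omega)
  have hsum : ∑ i, k i = 0 := sum_eq_zero_of_isUnit hA
    (fun i i' => by rw [hBΦ, apply_T_smul_T_smul hj hΦ, hAΦ]) hBneg hBinvneg hBBinv
  have hrev := add_rev_eq_zero_of_isUnit_det hk hsum ((Matrix.isUnit_iff_isUnit_det A).mp hA)
    fun i i' h => Polynomial.toLaurent_injective (by rw [hAΦ, hG0 i i' h, map_zero])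
  have hcard : Fintype.card {i // k i < 0} = Fintype.card {i // 0 < k i} :=
    Fintype.card_congr <| Fin.revPerm.subtypeEquiv fun i => by
      have := hrev i
      simp only [Fin.revPerm_apply]
      omega
  rw [latticeZero_inf_latticeInfty, span_natCast_smul_eq_monomialSpan,
    span_natCast_smul_eq_monomialSpan]
  refine ⟨hrev, fun i i' h => ?_, ?_, linearIndependent_T_natCast_smul v _,
    fun a ha b hb => ⟨_, eq_C_of_mem_monomialSpan_Icc hj hΦ hG ha hb⟩,
    fun a ha b hb => apply_comm_of_mem_monomialSpan_Icc hj hΦ hG ha hb,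
    radical_eq_monomialSpan hj hΦ hG ?_ hcard⟩
  · exact (isUnit_T (-w)).mul_right_eq_zero.mp (by rw [← hΦP, hG0 i i' h])
  · congr with i n
    simp only [Set.mem_Icc, Set.mem_ofPred_eq]
    omega
  · simpa only [hAΦ] using isUnit_det_coeff_zero_toLaurent hA

/-- With `W, v, k, P, j, w` as in the setting of lemma 2.6 of the paper:
(i) `kᵢ + k_{μ+1-i} = 0`; (ii) `P(vᵢ,vⱼ) = 0` when `kᵢ + kⱼ > 0`; (iii) `Γ = L₀ ∩ L_∞`
equals `⊕_{i : kᵢ ≥ 0} ⊕_{m=0}^{kᵢ} ℂ·z^m vᵢ`, on `Γ` the Laurent polynomial `z^{-w}P(a,b)`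
is a constant, the resulting bilinear form is symmetric, and its radical equals
`⊕_{i : kᵢ > 0} ⊕_{m=0}^{kᵢ} ℂ·z^m vᵢ`. -/
theorem stmt_12 (hμ : 1 ≤ μ) (w : ℤ)
    (v : Module.Basis (Fin μ) (LaurentPolynomial ℂ) W)
    (k : Fin μ → ℤ) (hk : Monotone k)
    (j : LaurentPolynomial ℂ →ₐ[ℂ] LaurentPolynomial ℂ) (hj : j (T 1) = -T 1)
    (P : W → W → LaurentPolynomial ℂ)
    (hPadd₁ : ∀ a a' b : W, P (a + a') b = P a b + P a' b)
    (hPadd₂ : ∀ a b b' : W, P a (b + b') = P a b + P a b')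
    (hPsmul₁ : ∀ (f : LaurentPolynomial ℂ) (a b : W), P (f • a) b = f * P a b)
    (hPsmul₂ : ∀ (f : LaurentPolynomial ℂ) (a b : W), P a (f • b) = j f * P a b)
    (hPsym : ∀ a b : W, P a b = LaurentPolynomial.C ((-1 : ℂ) ^ w) * j (P b a))
    (hmat₀ : ∃ A : Matrix (Fin μ) (Fin μ) (Polynomial ℂ), IsUnit A ∧
      ∀ i i', (A i i').toLaurent = T (-w) * P (v i) (v i'))
    (hmatInf : ∃ B Binv : Matrix (Fin μ) (Fin μ) (LaurentPolynomial ℂ),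
      (∀ i i', B i i' =
        T (-w) * P ((T (k i) : LaurentPolynomial ℂ) • v i)
          ((T (k i') : LaurentPolynomial ℂ) • v i')) ∧
      (∀ i i', ∀ m ∈ (B i i').coeff.support, m ≤ 0) ∧
      (∀ i i', ∀ m ∈ (Binv i i').coeff.support, m ≤ 0) ∧
      B * Binv = 1 ∧ Binv * B = 1) :
    -- (i) antisymmetry of the exponents
    (∀ i : Fin μ, k i + k i.rev = 0) ∧
    -- (ii) vanishing of P on pairs with kᵢ + kⱼ > 0
    (∀ i i' : Fin μ, 0 < k i + k i' → P (v i) (v i') = 0) ∧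
    -- (iii) description of Γ = L₀ ∩ L_∞ …
    (latticeZero v ⊓ latticeInfty v k = Submodule.span ℂ
      {x : W | ∃ (i : Fin μ) (m : ℕ), 0 ≤ k i ∧ (m : ℤ) ≤ k i ∧
        x = (T (m : ℤ) : LaurentPolynomial ℂ) • v i}) ∧
    LinearIndependent ℂ
      (fun p : {q : Fin μ × ℕ // 0 ≤ k q.1 ∧ (q.2 : ℤ) ≤ k q.1} =>
        ((T (p.1.2 : ℤ) : LaurentPolynomial ℂ) • v p.1.1 : W)) ∧
    -- … z^{-w}·P(a,b) is a constant on Γ …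
    (∀ a ∈ latticeZero v ⊓ latticeInfty v k, ∀ b ∈ latticeZero v ⊓ latticeInfty v k,
      ∃ c : ℂ, T (-w) * P a b = LaurentPolynomial.C c) ∧
    -- … the resulting bilinear form B(a,b) = z^{-w}·P(a,b) is symmetric …
    (∀ a ∈ latticeZero v ⊓ latticeInfty v k, ∀ b ∈ latticeZero v ⊓ latticeInfty v k,
      T (-w) * P a b = T (-w) * P b a) ∧
    -- … and its radical is ⊕_{i : kᵢ > 0} ⊕_{m=0}^{kᵢ} ℂ·z^m vᵢ.
    ({a : W | a ∈ latticeZero v ⊓ latticeInfty v k ∧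
        ∀ b ∈ latticeZero v ⊓ latticeInfty v k, T (-w) * P a b = 0} =
      ↑(Submodule.span ℂ
        {x : W | ∃ (i : Fin μ) (m : ℕ), 0 < k i ∧ (m : ℤ) ≤ k i ∧
          x = (T (m : ℤ) : LaurentPolynomial ℂ) • v i})) :=
  stmt_12_general w v k hk j hj P hPadd₁ hPadd₂ hPsmul₁ hPsmul₂ hPsym hmat₀ hmatInf
end
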